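/- arXiv:2402.01218 — 9 statements merged into one kernel-verified Lean document; each statement's English description precedes it below -/
import Mathlib

section
/- Let d ∈ ℕ, d ≥ 1, ρ a density matrix on ℂ^d, {P(f)}_{f∈Ω} a PVM on a nonempty finite set Ω, T > 0, and U : ℝ → M_d(ℂ) a differentiable family of unitary matrices with U(0) = 1. Set v(t) := ‖U'(t)‖_op and assume v is integrable on [0,T]. Then for every n ∈ ℕ and all times 0 ≤ t_1 < … < t_n ≤ T, the quantum bi-probability satisfies Σ_{f⁺,f⁻ ∈ Ω^n} |Q_{t_n,…,t_1}(f⁺,f⁻)| ≤ d² · exp(2(d−1) ∫₀^T v(s) ds). In particular, the family of quantum bi-probabilities on [0,T] is uniformly bounded. -/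
open Matrix
open scoped Matrix.Norms.L2Operator
open scoped ComplexOrder

/-- The Heisenberg-picture projection at time `t`: `P_t(f) = U(t)* P(f) U(t)`. -/
noncomputable def heisenbergProj {d : ℕ} {Ω : Type*}
    (P : Ω → Matrix (Fin d) (Fin d) ℂ) (U : ℝ → Matrix (Fin d) (Fin d) ℂ)
    (t : ℝ) (f : Ω) : Matrix (Fin d) (Fin d) ℂ :=
  (U t)ᴴ * P f * U t

/-- The quantum bi-probability
`Q_{t_n,…,t_1}(f⁺,f⁻) = tr[P_{t_n}(f_n⁺)⋯P_{t_1}(f_1⁺) ρ P_{t_1}(f_1⁻)⋯P_{t_n}(f_n⁻)]`,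
where indices `j : Fin n` are ordered so that `j = 0` corresponds to the earliest time `t_1`. -/
noncomputable def quantumBiProb {d : ℕ} {Ω : Type*}
    (ρ : Matrix (Fin d) (Fin d) ℂ) (P : Ω → Matrix (Fin d) (Fin d) ℂ)
    (U : ℝ → Matrix (Fin d) (Fin d) ℂ) {n : ℕ} (t : Fin n → ℝ)
    (fp fm : Fin n → Ω) : ℂ :=
  Matrix.trace
    ((List.ofFn fun j => heisenbergProj P U (t j) (fp j)).reverse.prod * ρ *
      (List.ofFn fun j => heisenbergProj P U (t j) (fm j)).prod)

/-!
Write `ρ = S Sᴴ` and `C_f = P_{t_n}(f_n) ⋯ P_{t_1}(f_1)`. Then `Q(f⁺, f⁻)` is the Hilbert–Schmidt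
inner product of `C_{f⁻} S` and `C_{f⁺} S`, so the double sum is at most `(∑_f ‖C_f S‖₂)²`.

This single sum is estimated one time step at a time. If `X = P_s(g) X`, then
`(1 - P_u(g)) X = U(u)ᴴ (1 - P(g)) (U(u) - U(s)) X` has norm at most `‖U(u) - U(s)‖ ‖X‖₂`, and at
most `d - 1` of the projections `P_u(f)`, `f ≠ g`, are nonzero (each nonzero one has trace `≥ 1`),
so Cauchy–Schwarz gives `∑_f ‖P_u(f) X‖₂ ≤ (1 + √(d - 1) ‖U(u) - U(s)‖) ‖X‖₂`. With
`‖U(u) - U(s)‖ ≤ ∫_s^u v` and `1 + x ≤ eˣ` the factors multiply to `exp (√(d - 1) ∫_0^T v)`.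
The first step, after inserting `1 = ∑_g P_0(g)`, costs `√d`; finally `√(d - 1) ≤ d - 1`.
-/

open Finset

namespace Matrix

variable {m n : Type*}

/-- The columns of `X` in an `ℓ²`-sum, so that `trace (Xᴴ * Y)` is an inner product and
`‖hsVec X‖` is the Hilbert–Schmidt norm. -/
noncomputable def hsVec : Matrix m n ℂ →ₗ[ℂ] PiLp 2 (fun _ : n => EuclideanSpace ℂ m) where
  toFun X := WithLp.toLp 2 fun j => WithLp.toLp 2 fun i => X i j
  map_add' _ _ := rfl
  map_smul' _ _ := rfl

lemma hsVec_apply (X : Matrix m n ℂ) (j : n) : hsVec X j = WithLp.toLp 2 fun i => X i j := rfl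

variable [Fintype m] [Fintype n]

noncomputable def hsNorm (X : Matrix m n ℂ) : ℝ := ‖hsVec X‖

lemma hsNorm_nonneg (X : Matrix m n ℂ) : 0 ≤ hsNorm X := norm_nonneg _

lemma hsNorm_zero : hsNorm (0 : Matrix m n ℂ) = 0 := by simp [hsNorm]

lemma hsNorm_sum_le {ι : Type*} (s : Finset ι) (X : ι → Matrix m n ℂ) :
    hsNorm (∑ i ∈ s, X i) ≤ ∑ i ∈ s, hsNorm (X i) := by
  simpa only [hsNorm, map_sum] using norm_sum_le s fun i => hsVec (X i)

lemma inner_hsVec (X Y : Matrix m n ℂ) : inner ℂ (hsVec X) (hsVec Y) = trace (Xᴴ * Y) := by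
  simp only [PiLp.inner_apply, hsVec_apply, RCLike.inner_apply', trace, diag_apply, mul_apply,
    conjTranspose_apply]
  rfl

lemma hsNorm_sq (X : Matrix m n ℂ) : hsNorm X ^ 2 = (trace (Xᴴ * X)).re := by
  rw [hsNorm, ← inner_hsVec, inner_self_eq_norm_sq_to_K]; norm_cast

lemma norm_trace_conjTranspose_mul_le (X Y : Matrix m n ℂ) :
    ‖trace (Xᴴ * Y)‖ ≤ hsNorm X * hsNorm Y := by
  rw [← inner_hsVec]; exact norm_inner_le_norm _ _

lemma hsNorm_mul_le [DecidableEq m] (A : Matrix m m ℂ) (X : Matrix m n ℂ) :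
    hsNorm (A * X) ≤ ‖A‖ * hsNorm X := by
  refine le_of_sq_le_sq ?_ (mul_nonneg (norm_nonneg _) (hsNorm_nonneg _))
  rw [hsNorm, hsNorm, mul_pow, PiLp.norm_sq_eq_of_L2, PiLp.norm_sq_eq_of_L2, Finset.mul_sum]
  gcongr with j
  rw [hsVec_apply, hsVec_apply, ← mul_pow]
  exact pow_le_pow_left₀ (norm_nonneg _) (A.l2_opNorm_mulVec (WithLp.toLp 2 fun i => X i j)) 2

lemma hsNorm_sq_mul_of_isStarProjection {p : Matrix m m ℂ} (hp : IsStarProjection p)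
    (X : Matrix m n ℂ) : hsNorm (p * X) ^ 2 = (trace (Xᴴ * (p * X))).re := by
  rw [hsNorm_sq, conjTranspose_mul, ← star_eq_conjTranspose p, hp.isSelfAdjoint.star_eq,
    Matrix.mul_assoc, ← Matrix.mul_assoc p, hp.isIdempotentElem.eq]

lemma hsNorm_mul_le_of_isStarProjection [DecidableEq m] {p : Matrix m m ℂ}
    (hp : IsStarProjection p) (X : Matrix m n ℂ) : hsNorm (p * X) ≤ hsNorm X :=
  (hsNorm_mul_le p X).trans <|
    mul_le_of_le_one_left (hsNorm_nonneg X) (IsStarProjection.norm_le p hp)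

lemma trace_eq_finrank_range_of_isIdempotentElem [DecidableEq m] {K : Type*} [Field K]
    {p : Matrix m m K} (hp : IsIdempotentElem p) :
    trace p = Module.finrank K (LinearMap.range (toLin' p)) := by
  have hp' : IsIdempotentElem (toLin' p) := hp.map toLinAlgEquiv'
  rw [← trace_toLin'_eq, (LinearMap.IsIdempotentElem.isProj_range _ hp').trace]

open Classical in
lemma card_filter_ne_zero_le_of_sum_eq_one [DecidableEq m] {K : Type*} [Field K] [CharZero K]
    {ι : Type*} [Fintype ι] {P : ι → Matrix m m K} (hP : ∀ i, IsIdempotentElem (P i))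
    (hsum : ∑ i, P i = 1) : #{i | P i ≠ 0} ≤ Fintype.card m := by
  set k : ι → ℕ := fun i => Module.finrank K (LinearMap.range (toLin' (P i)))
  have hk : ∑ i, k i = Fintype.card m := by
    have h := congrArg trace hsum
    simp only [trace_sum, trace_eq_finrank_range_of_isIdempotentElem (hP _), trace_one] at h
    exact_mod_cast h
  have hpos : ∀ i ∈ ({i | P i ≠ 0} : Finset ι), 1 ≤ k i := by
    intro i hi
    rw [Nat.one_le_iff_ne_zero, Ne, Submodule.finrank_eq_zero, LinearMap.range_eq_bot,
      ← map_zero toLin', toLin'.injective.eq_iff]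
    exact (Finset.mem_filter.mp hi).2
  calc #{i | P i ≠ 0} ≤ ∑ i ∈ {i | P i ≠ 0}, k i := by
        simpa using Finset.card_nsmul_le_sum _ _ _ hpos
    _ ≤ ∑ i, k i := Finset.sum_le_univ_sum_of_nonneg fun _ => Nat.zero_le _
    _ = Fintype.card m := hk

open Classical in
lemma sum_hsNorm_mul_le_sqrt_card {Ω : Type*} (s : Finset Ω) {P : Ω → Matrix m m ℂ}
    (hP : ∀ f, IsStarProjection (P f)) (X : Matrix m n ℂ) :
    ∑ f ∈ s, hsNorm (P f * X) ≤
      √(#{f ∈ s | P f ≠ 0} : ℝ) * √((trace (Xᴴ * ((∑ f ∈ s, P f) * X))).re) := by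
  calc ∑ f ∈ s, hsNorm (P f * X) = ∑ f ∈ s with P f ≠ 0, 1 * hsNorm (P f * X) := by
        simp only [one_mul]
        refine (Finset.sum_filter_of_ne (p := fun f => P f ≠ 0) fun f _ h hf => h ?_).symm
        rw [hf, Matrix.zero_mul, hsNorm_zero]
    _ ≤ √(∑ f ∈ s with P f ≠ 0, 1 ^ 2) * √(∑ f ∈ s with P f ≠ 0, hsNorm (P f * X) ^ 2) :=
        Real.sum_mul_le_sqrt_mul_sqrt _ _ _
    _ ≤ √(#{f ∈ s | P f ≠ 0} : ℝ) * √(∑ f ∈ s, hsNorm (P f * X) ^ 2) := by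
        gcongr
        · simp
        · exact Finset.filter_subset _ _
    _ = √(#{f ∈ s | P f ≠ 0} : ℝ) * √((trace (Xᴴ * ((∑ f ∈ s, P f) * X))).re) := by
        rw [Matrix.sum_mul, Matrix.mul_sum, trace_sum, Complex.re_sum]
        simp only [hsNorm_sq_mul_of_isStarProjection (hP _)]

variable [DecidableEq m]

lemma hsNorm_one_sub_conj_mul_le {p V W X : Matrix m m ℂ} (hp : IsStarProjection p)
    (hV : V ∈ unitaryGroup m ℂ) (hW : W ∈ unitaryGroup m ℂ) (hX : Wᴴ * p * W * X = X) :
    hsNorm ((1 - Vᴴ * p * V) * X) ≤ ‖V - W‖ * hsNorm X := by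
  have hWX : p * (W * X) = W * X := by
    conv_rhs => rw [← hX]
    simp only [← mul_assoc, ← star_eq_conjTranspose, Unitary.mul_star_self_of_mem hW, one_mul]
  have hfactor : (1 - Vᴴ * p * V) * X = Vᴴ * (1 - p) * ((V - W) * X) := by
    have h : Vᴴ * (1 - p) * ((V - W) * X) =
        Vᴴ * V * X - Vᴴ * p * V * X - Vᴴ * (W * X - p * (W * X)) := by noncomm_ring
    rw [h, hWX, sub_self, mul_zero, sub_zero, ← star_eq_conjTranspose,
      Unitary.star_mul_self_of_mem hV, one_mul]
    noncomm_ring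
  have hnorm : ‖Vᴴ * (1 - p)‖ ≤ 1 := by
    rw [← star_eq_conjTranspose, CStarRing.norm_mem_unitary_mul _ (Unitary.star_mem hV)]
    exact IsStarProjection.norm_le _ hp.one_sub
  rw [hfactor]
  calc hsNorm (Vᴴ * (1 - p) * ((V - W) * X)) ≤ ‖Vᴴ * (1 - p)‖ * (‖V - W‖ * hsNorm X) :=
        (hsNorm_mul_le _ _).trans (by gcongr; exact hsNorm_mul_le _ _)
    _ ≤ ‖V - W‖ * hsNorm X :=
        mul_le_of_le_one_left (mul_nonneg (norm_nonneg _) (hsNorm_nonneg _)) hnorm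

/-- Mutual orthogonality of the `P f` follows from these two fields. -/
structure IsPVM {Ω : Type*} [Fintype Ω] (P : Ω → Matrix m m ℂ) : Prop where
  isStarProjection : ∀ f, IsStarProjection (P f)
  sum_eq_one : ∑ f, P f = 1

namespace IsPVM

variable {Ω : Type*} [Fintype Ω] {P : Ω → Matrix m m ℂ}

lemma conj_unitary (hP : IsPVM P) {V : Matrix m m ℂ} (hV : V ∈ unitaryGroup m ℂ) :
    IsPVM fun f => Vᴴ * P f * V := by
  set φ := (Unitary.conjStarAlgAut ℂ (Matrix m m ℂ) ⟨V, hV⟩).symm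
  refine ⟨fun f => (hP.isStarProjection f).map φ, ?_⟩
  change ∑ f, φ (P f) = 1
  rw [← map_sum, hP.sum_eq_one, map_one]

lemma sum_hsNorm_mul_le (hP : IsPVM P) (X : Matrix m n ℂ) :
    ∑ f, hsNorm (P f * X) ≤ √(Fintype.card m) * hsNorm X := by
  have h := sum_hsNorm_mul_le_sqrt_card univ hP.isStarProjection X
  rw [hP.sum_eq_one, Matrix.one_mul, ← hsNorm_sq, Real.sqrt_sq (hsNorm_nonneg X)] at h
  have hcard := card_filter_ne_zero_le_of_sum_eq_one
    (fun f => (hP.isStarProjection f).isIdempotentElem) hP.sum_eq_one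
  exact h.trans (mul_le_mul_of_nonneg_right (by gcongr) (hsNorm_nonneg X))

lemma sum_hsNorm_mul_le_of_ne_zero (hP : IsPVM P) {g : Ω} (hg : P g ≠ 0) (X : Matrix m n ℂ) :
    ∑ f, hsNorm (P f * X) ≤ hsNorm X + √(Fintype.card m - 1 : ℝ) * hsNorm ((1 - P g) * X) := by
  classical
  have hcompl : ∑ f ∈ univ.erase g, P f = 1 - P g := by
    rw [Finset.sum_erase_eq_sub (mem_univ g), hP.sum_eq_one]
  have h := sum_hsNorm_mul_le_sqrt_card (univ.erase g) hP.isStarProjection X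
  rw [hcompl, ← hsNorm_sq_mul_of_isStarProjection (hP.isStarProjection g).one_sub,
    Real.sqrt_sq (hsNorm_nonneg _)] at h
  have hcard : (#{f ∈ univ.erase g | P f ≠ 0} : ℝ) ≤ Fintype.card m - 1 := by
    have hmem : g ∈ ({f | P f ≠ 0} : Finset Ω) := by simpa using hg
    have hle := card_filter_ne_zero_le_of_sum_eq_one
      (fun f => (hP.isStarProjection f).isIdempotentElem) hP.sum_eq_one
    rw [← Finset.card_erase_add_one hmem] at hle
    rw [Finset.filter_erase, le_sub_iff_add_le]
    exact_mod_cast hle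
  rw [← Finset.add_sum_erase _ _ (mem_univ g)]
  gcongr
  · exact hsNorm_mul_le_of_isStarProjection (hP.isStarProjection g) X
  · exact h.trans (mul_le_mul_of_nonneg_right (by gcongr) (hsNorm_nonneg _))

lemma sum_hsNorm_conj_mul_le (hP : IsPVM P) {V W X : Matrix m m ℂ} (hV : V ∈ unitaryGroup m ℂ)
    (hW : W ∈ unitaryGroup m ℂ) {g : Ω} (hX : Wᴴ * P g * W * X = X) :
    ∑ f, hsNorm (Vᴴ * P f * V * X) ≤
      (1 + √(Fintype.card m - 1 : ℝ) * ‖V - W‖) * hsNorm X := by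
  by_cases hg : P g = 0
  · obtain rfl : X = 0 := by rw [← hX, hg]; simp
    simp [hsNorm_zero]
  have hg' : Vᴴ * P g * V ≠ 0 :=
    (map_ne_zero_iff _ (Unitary.conjStarAlgAut ℂ (Matrix m m ℂ) ⟨V, hV⟩).symm.injective).mpr hg
  calc ∑ f, hsNorm (Vᴴ * P f * V * X)
      ≤ hsNorm X + √(Fintype.card m - 1 : ℝ) * hsNorm ((1 - Vᴴ * P g * V) * X) :=
        (hP.conj_unitary hV).sum_hsNorm_mul_le_of_ne_zero hg' X
    _ ≤ hsNorm X + √(Fintype.card m - 1 : ℝ) * (‖V - W‖ * hsNorm X) := by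
        gcongr
        exact hsNorm_one_sub_conj_mul_le (hP.isStarProjection g) hV hW hX
    _ = (1 + √(Fintype.card m - 1 : ℝ) * ‖V - W‖) * hsNorm X := by ring

end IsPVM

end Matrix

open MeasureTheory

lemma Fintype.sum_pi_fin_succ {α M : Type*} [Fintype α] [AddCommMonoid M] {n : ℕ}
    (F : (Fin (n + 1) → α) → M) :
    ∑ f, F f = ∑ a, ∑ f : Fin n → α, F (Fin.cons a f) := by
  rw [← (Fin.consEquiv fun _ => α).sum_comp, Fintype.sum_prod_type]
  rfl

section Chain

variable {d : ℕ} {Ω : Type*} (P : Ω → Matrix (Fin d) (Fin d) ℂ) (U : ℝ → Matrix (Fin d) (Fin d) ℂ)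

/-- `C_f = P_{t_n}(f_n) ⋯ P_{t_1}(f_1)`. -/
noncomputable def chainOp {n : ℕ} (t : Fin n → ℝ) (f : Fin n → Ω) : Matrix (Fin d) (Fin d) ℂ :=
  (List.ofFn fun j => heisenbergProj P U (t j) (f j)).reverse.prod

lemma chainOp_cons {n : ℕ} (t : Fin (n + 1) → ℝ) (g : Ω) (f : Fin n → Ω) :
    chainOp P U t (Fin.cons g f) = chainOp P U (Fin.tail t) f * heisenbergProj P U (t 0) g := by
  simp [chainOp, List.ofFn_succ, Fin.tail]

lemma conjTranspose_chainOp (hP : ∀ f, (P f).IsHermitian) {n : ℕ} (t : Fin n → ℝ)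
    (f : Fin n → Ω) :
    (chainOp P U t f)ᴴ = (List.ofFn fun j => heisenbergProj P U (t j) (f j)).prod := by
  have hsa (j : Fin n) : (heisenbergProj P U (t j) (f j))ᴴ = heisenbergProj P U (t j) (f j) := by
    simp [heisenbergProj, Matrix.mul_assoc, (hP (f j)).eq]
  rw [chainOp, conjTranspose_list_prod, ← List.map_reverse, List.reverse_reverse, List.map_ofFn]
  simp only [Function.comp_def, hsa]

lemma quantumBiProb_mul_conjTranspose_self (hP : ∀ f, (P f).IsHermitian)
    (S : Matrix (Fin d) (Fin d) ℂ) {n : ℕ} (t : Fin n → ℝ) (fp fm : Fin n → Ω) :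
    quantumBiProb (S * Sᴴ) P U t fp fm =
      trace ((chainOp P U t fm * S)ᴴ * (chainOp P U t fp * S)) := by
  rw [quantumBiProb, ← conjTranspose_chainOp P U hP]
  change trace (chainOp P U t fp * (S * Sᴴ) * (chainOp P U t fm)ᴴ) = _
  rw [conjTranspose_mul, Matrix.mul_assoc Sᴴ, trace_mul_comm Sᴴ,
    trace_mul_comm (chainOp P U t fp * _)]
  simp only [Matrix.mul_assoc]

variable {P U} [Fintype Ω]

lemma isPVM_heisenbergProj (hP : IsPVM P) {t : ℝ} (hU : U t ∈ unitaryGroup (Fin d) ℂ) :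
    IsPVM (heisenbergProj P U t) :=
  hP.conj_unitary hU

lemma sum_hsNorm_heisenbergProj_mul_le_exp (hP : IsPVM P)
    (hU : ∀ t, U t ∈ unitaryGroup (Fin d) ℂ) (hUdiff : Differentiable ℝ U) {s u : ℝ} (hsu : s ≤ u)
    (hv : IntervalIntegrable (fun x => ‖deriv U x‖) volume s u) {g : Ω}
    {X : Matrix (Fin d) (Fin d) ℂ} (hX : heisenbergProj P U s g * X = X) :
    ∑ f, hsNorm (heisenbergProj P U u f * X) ≤
      Real.exp (√(d - 1 : ℝ) * ∫ x in s..u, ‖deriv U x‖) * hsNorm X := by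
  have hdisp : ‖U u - U s‖ ≤ ∫ x in s..u, ‖deriv U x‖ :=
    norm_sub_le_integral_of_norm_deriv_le_of_le hsu hUdiff.continuous.continuousOn
      hUdiff.differentiableOn (ae_of_all _ fun _ _ => le_rfl) hv
  have h := hP.sum_hsNorm_conj_mul_le (hU u) (hU s) hX
  rw [Fintype.card_fin] at h
  refine h.trans (mul_le_mul_of_nonneg_right ?_ (hsNorm_nonneg X))
  linarith [mul_le_mul_of_nonneg_left hdisp (Real.sqrt_nonneg (d - 1 : ℝ)),
    Real.add_one_le_exp (√(d - 1 : ℝ) * ∫ x in s..u, ‖deriv U x‖)]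

lemma sum_hsNorm_chainOp_mul_le_of_mul_eq_self (hP : IsPVM P)
    (hU : ∀ t, U t ∈ unitaryGroup (Fin d) ℂ) (hUdiff : Differentiable ℝ U) {T : ℝ} {n : ℕ}
    (t : Fin n → ℝ) (ht : Monotone t) {s : ℝ} (hsT : s ≤ T) (hst : ∀ j, s ≤ t j)
    (htT : ∀ j, t j ≤ T) (hv : IntegrableOn (fun x => ‖deriv U x‖) (Set.Icc s T)) {g : Ω}
    {X : Matrix (Fin d) (Fin d) ℂ} (hX : heisenbergProj P U s g * X = X) :
    ∑ f, hsNorm (chainOp P U t f * X) ≤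
      Real.exp (√(d - 1 : ℝ) * ∫ x in s..T, ‖deriv U x‖) * hsNorm X := by
  induction n generalizing s g X with
  | zero =>
    have hI : 0 ≤ ∫ x in s..T, ‖deriv U x‖ :=
      intervalIntegral.integral_nonneg hsT fun _ _ => norm_nonneg _
    simpa [chainOp] using le_mul_of_one_le_left (hsNorm_nonneg X)
      (Real.one_le_exp (mul_nonneg (Real.sqrt_nonneg _) hI))
  | succ n ih =>
    have hs0 := hst 0
    have ht0T := htT 0
    have hint {a b : ℝ} (hsa : s ≤ a) (hab : a ≤ b) (hbT : b ≤ T) :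
        IntervalIntegrable (fun x => ‖deriv U x‖) volume a b :=
      (intervalIntegrable_iff_integrableOn_Icc_of_le hab).mpr
        (hv.mono_set (Set.Icc_subset_Icc hsa hbT))
    have hIH (g' : Ω) :=
      ih (Fin.tail t) (ht.comp Fin.strictMono_succ.monotone) ht0T (fun _ => ht (Fin.zero_le _))
        (fun _ => htT _) (hv.mono_set (Set.Icc_subset_Icc_left hs0)) (g := g')
        (X := heisenbergProj P U (t 0) g' * X) (by rw [← Matrix.mul_assoc,
          ((isPVM_heisenbergProj hP (hU _)).isStarProjection _).isIdempotentElem.eq])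
    calc ∑ f, hsNorm (chainOp P U t f * X)
        = ∑ g', ∑ f, hsNorm (chainOp P U (Fin.tail t) f * (heisenbergProj P U (t 0) g' * X)) := by
          simp only [Fintype.sum_pi_fin_succ, chainOp_cons, Matrix.mul_assoc]
      _ ≤ ∑ g', Real.exp (√(d - 1 : ℝ) * ∫ x in t 0..T, ‖deriv U x‖) *
            hsNorm (heisenbergProj P U (t 0) g' * X) := Finset.sum_le_sum fun g' _ => hIH g'
      _ ≤ Real.exp (√(d - 1 : ℝ) * ∫ x in t 0..T, ‖deriv U x‖) *
            (Real.exp (√(d - 1 : ℝ) * ∫ x in s..t 0, ‖deriv U x‖) * hsNorm X) := by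
          rw [← Finset.mul_sum]
          gcongr
          exact sum_hsNorm_heisenbergProj_mul_le_exp hP hU hUdiff hs0 (hint le_rfl hs0 ht0T) hX
      _ = Real.exp (√(d - 1 : ℝ) * ∫ x in s..T, ‖deriv U x‖) * hsNorm X := by
          rw [← intervalIntegral.integral_add_adjacent_intervals (hint le_rfl hs0 ht0T)
            (hint hs0 ht0T le_rfl), mul_add, Real.exp_add]
          ring

lemma sum_hsNorm_chainOp_mul_le (hP : IsPVM P) (hU : ∀ t, U t ∈ unitaryGroup (Fin d) ℂ)
    (hUdiff : Differentiable ℝ U) {T : ℝ} (hT : 0 ≤ T)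
    (hv : IntegrableOn (fun x => ‖deriv U x‖) (Set.Icc 0 T)) {n : ℕ} (t : Fin n → ℝ)
    (ht : Monotone t) (htI : ∀ j, t j ∈ Set.Icc 0 T) (X : Matrix (Fin d) (Fin d) ℂ) :
    ∑ f, hsNorm (chainOp P U t f * X) ≤
      √d * Real.exp (√(d - 1 : ℝ) * ∫ x in (0 : ℝ)..T, ‖deriv U x‖) * hsNorm X := by
  set E := Real.exp (√(d - 1 : ℝ) * ∫ x in (0 : ℝ)..T, ‖deriv U x‖)
  have hP₀ := isPVM_heisenbergProj hP (hU 0)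
  calc ∑ f, hsNorm (chainOp P U t f * X)
      = ∑ f, hsNorm (∑ g, chainOp P U t f * (heisenbergProj P U 0 g * X)) := by
        simp only [← Matrix.mul_sum, ← Matrix.sum_mul, hP₀.sum_eq_one, Matrix.one_mul]
    _ ≤ ∑ g, ∑ f, hsNorm (chainOp P U t f * (heisenbergProj P U 0 g * X)) :=
        (Finset.sum_le_sum fun f _ => hsNorm_sum_le _ _).trans_eq Finset.sum_comm
    _ ≤ ∑ g, E * hsNorm (heisenbergProj P U 0 g * X) := by
        refine Finset.sum_le_sum fun g _ => ?_
        refine sum_hsNorm_chainOp_mul_le_of_mul_eq_self hP hU hUdiff t ht hT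
          (fun j => (htI j).1) (fun j => (htI j).2) hv (g := g) ?_
        rw [← Matrix.mul_assoc, (hP₀.isStarProjection g).isIdempotentElem.eq]
    _ ≤ E * (√d * hsNorm X) := by
        rw [← Finset.mul_sum]
        gcongr
        simpa using hP₀.sum_hsNorm_mul_le X
    _ = √d * E * hsNorm X := by ring

lemma sum_sum_norm_quantumBiProb_le (hP : ∀ f, (P f).IsHermitian) (S : Matrix (Fin d) (Fin d) ℂ)
    {n : ℕ} (t : Fin n → ℝ) :
    ∑ fp, ∑ fm, ‖quantumBiProb (S * Sᴴ) P U t fp fm‖ ≤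
      (∑ f, hsNorm (chainOp P U t f * S)) ^ 2 := by
  rw [sq, Finset.sum_mul_sum]
  gcongr with fp _ fm _
  rw [quantumBiProb_mul_conjTranspose_self P U hP, mul_comm]
  exact norm_trace_conjTranspose_mul_le _ _

end Chain

lemma sq_sqrt_mul_exp_le {d : ℕ} (hd : 1 ≤ d) {I : ℝ} (hI : 0 ≤ I) :
    (√d * Real.exp (√(d - 1 : ℝ) * I)) ^ 2 ≤ (d : ℝ) ^ 2 * Real.exp (2 * ((d : ℝ) - 1) * I) := by
  have hd' : (1 : ℝ) ≤ d := by exact_mod_cast hd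
  have hsqrt : √(d - 1 : ℝ) ≤ d - 1 := by
    rw [Real.sqrt_le_self_iff]
    rcases hd.eq_or_lt with rfl | h
    · simp
    · right
      have : (2 : ℝ) ≤ d := by exact_mod_cast h
      linarith
  rw [mul_pow, Real.sq_sqrt (Nat.cast_nonneg _), sq (Real.exp _), ← Real.exp_add]
  gcongr
  · nlinarith
  · nlinarith

theorem quantumBiProb_uniform_bound_general {d : ℕ} (hd : 1 ≤ d)
    {Ω : Type*} [Fintype Ω]
    (ρ : Matrix (Fin d) (Fin d) ℂ) (hρ : ρ.PosSemidef) (hρtr : ρ.trace = 1)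
    (P : Ω → Matrix (Fin d) (Fin d) ℂ)
    (hPsa : ∀ f, (P f).IsHermitian) (hPidem : ∀ f, P f * P f = P f)
    (hPsum : ∑ f, P f = 1)
    (U : ℝ → Matrix (Fin d) (Fin d) ℂ)
    (hU : ∀ t, U t ∈ Matrix.unitaryGroup (Fin d) ℂ)
    (hUdiff : Differentiable ℝ U)
    {T : ℝ} (hT : 0 < T)
    (hUint : MeasureTheory.IntegrableOn (fun s => ‖deriv U s‖) (Set.Icc 0 T))
    (n : ℕ) (t : Fin n → ℝ) (ht : StrictMono t) (htI : ∀ j, t j ∈ Set.Icc 0 T) :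
    ∑ fp : Fin n → Ω, ∑ fm : Fin n → Ω, ‖quantumBiProb ρ P U t fp fm‖
      ≤ (d : ℝ) ^ 2 * Real.exp (2 * ((d : ℝ) - 1) * ∫ s in (0:ℝ)..T, ‖deriv U s‖) := by
  have hP : IsPVM P := ⟨fun f => ⟨hPidem f, (hPsa f).isSelfAdjoint⟩, hPsum⟩
  open scoped MatrixOrder in
  obtain ⟨B, rfl⟩ := CStarAlgebra.nonneg_iff_eq_star_mul_self.mp hρ.nonneg
  have hB : hsNorm Bᴴ = 1 := by
    rw [← pow_eq_one_iff_of_nonneg (hsNorm_nonneg _) two_ne_zero, hsNorm_sq,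
      conjTranspose_conjTranspose, trace_mul_comm, ← star_eq_conjTranspose, hρtr, Complex.one_re]
  have hI : 0 ≤ ∫ s in (0:ℝ)..T, ‖deriv U s‖ :=
    intervalIntegral.integral_nonneg hT.le fun _ _ => norm_nonneg _
  rw [star_eq_conjTranspose]
  calc ∑ fp, ∑ fm, ‖quantumBiProb (Bᴴ * B) P U t fp fm‖
      ≤ (∑ f, hsNorm (chainOp P U t f * Bᴴ)) ^ 2 := by
        simpa using sum_sum_norm_quantumBiProb_le hPsa Bᴴ t
    _ ≤ (√d * Real.exp (√(d - 1 : ℝ) * ∫ s in (0:ℝ)..T, ‖deriv U s‖) * hsNorm Bᴴ) ^ 2 :=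
        pow_le_pow_left₀ (Finset.sum_nonneg fun _ _ => hsNorm_nonneg _)
          (sum_hsNorm_chainOp_mul_le hP hU hUdiff hT.le hUint t ht.monotone htI _) 2
    _ ≤ (d : ℝ) ^ 2 * Real.exp (2 * ((d : ℝ) - 1) * ∫ s in (0:ℝ)..T, ‖deriv U s‖) := by
        rw [hB, mul_one]
        exact sq_sqrt_mul_exp_le hd hI

/-- uniform bound for quantum bi-probabilities. If `U` is a differentiable
family of unitaries with `U 0 = 1` whose derivative has integrable operator norm
`v(t) = ‖U'(t)‖` on `[0,T]` (the L2 operator norm on matrices), then for all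
`0 ≤ t_1 < … < t_n ≤ T`,
`Σ_{f⁺,f⁻ ∈ Ω^n} |Q_{t_n,…,t_1}(f⁺,f⁻)| ≤ d² exp(2(d−1) ∫₀^T v(s) ds)`. -/
theorem quantumBiProb_uniform_bound {d : ℕ} (hd : 1 ≤ d)
    {Ω : Type*} [Fintype Ω] [Nonempty Ω] [DecidableEq Ω]
    (ρ : Matrix (Fin d) (Fin d) ℂ) (hρ : ρ.PosSemidef) (hρtr : ρ.trace = 1)
    (P : Ω → Matrix (Fin d) (Fin d) ℂ)
    (hPsa : ∀ f, (P f).IsHermitian) (hPidem : ∀ f, P f * P f = P f)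
    (hPorth : ∀ f f', f ≠ f' → P f * P f' = 0) (hPsum : ∑ f, P f = 1)
    (U : ℝ → Matrix (Fin d) (Fin d) ℂ)
    (hU : ∀ t, U t ∈ Matrix.unitaryGroup (Fin d) ℂ)
    (hU0 : U 0 = 1) (hUdiff : Differentiable ℝ U)
    {T : ℝ} (hT : 0 < T)
    (hUint : MeasureTheory.IntegrableOn (fun s => ‖deriv U s‖) (Set.Icc 0 T))
    (n : ℕ) (t : Fin n → ℝ) (ht : StrictMono t) (htI : ∀ j, t j ∈ Set.Icc 0 T) :
    ∑ fp : Fin n → Ω, ∑ fm : Fin n → Ω, ‖quantumBiProb ρ P U t fp fm‖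
      ≤ (d : ℝ) ^ 2 * Real.exp (2 * ((d : ℝ) - 1) * ∫ s in (0:ℝ)..T, ‖deriv U s‖) :=
  quantumBiProb_uniform_bound_general hd ρ hρ hρtr P hPsa hPidem hPsum U hU hUdiff hT hUint n t ht
    htI
end

section
/- Let d ∈ ℕ, d ≥ 1, ρ a density matrix on ℂ^d, {P(f)}_{f∈Ω} a PVM on a nonempty finite set Ω, and U : ℝ → M_d(ℂ) a family of unitary matrices. Let n ≤ N, let t_1 < … < t_n and τ_1 < … < τ_N be real times such that (τ_1,…,τ_N) is a refinement of (t_1,…,t_n), i.e. there is a map ι : {1,…,n} → {1,…,N} with ι(n) = N and τ_{ι(j)} = t_j for all j. Then Σ_{f⁺,f⁻ ∈ Ω^n} |Q_{t_n,…,t_1}(f⁺,f⁻)| ≤ Σ_{φ⁺,φ⁻ ∈ Ω^N} |Q_{τ_N,…,τ_1}(φ⁺,φ⁻)|. -/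
open Matrix
open scoped ComplexOrder

/-! ### Auxiliary lemmas -/

/-- Reversal of an `ofFn` list. -/
private lemma ofFn_reverse {α : Type*} :
    ∀ {m : ℕ} (f : Fin m → α), (List.ofFn f).reverse = List.ofFn (fun i => f i.rev) := by
  intro m
  induction m with
  | zero => intro f; simp
  | succ m ih =>
    intro f
    rw [List.ofFn_succ, List.reverse_cons, ih (fun i => f i.succ),
      List.ofFn_succ' (fun i => f i.rev)]
    simp [Fin.rev_castSucc, Fin.rev_last, List.concat_eq_append]

/-- A product of an `ofFn` list whose entries off the range of a strictly monotone map are `1`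
equals the product over the range. -/
private lemma prod_ofFn_eq_of_one {M : Type*} [Monoid M] :
    ∀ {m n : ℕ} (ι : Fin n → Fin m), StrictMono ι →
      ∀ (g : Fin m → M), (∀ k, k ∉ Set.range ι → g k = 1) →
      (List.ofFn g).prod = (List.ofFn (g ∘ ι)).prod := by
  intro m
  induction m with
  | zero =>
    intro n ι _ g _
    match n with
    | 0 => simp
    | n+1 => exact (ι 0).elim0
  | succ m ih =>
    intro n ι hι g hg
    match n with
    | 0 =>
      have h1 : ∀ x ∈ List.ofFn g, x = 1 := by
        intro x hx
        rw [List.mem_ofFn] at hx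
        obtain ⟨k, rfl⟩ := hx
        exact hg k (by rintro ⟨j, -⟩; exact j.elim0)
      rw [List.prod_eq_one h1]
      simp
    | n+1 =>
      by_cases h0 : ι 0 = 0
      · have hne : ∀ j : Fin n, ι j.succ ≠ 0 := by
          intro j
          have h : ι 0 < ι j.succ := hι (Fin.succ_pos j)
          rw [h0] at h
          exact Fin.pos_iff_ne_zero.mp h
        have hι'mono : StrictMono (fun j : Fin n => (ι j.succ).pred (hne j)) := by
          intro a b hab
          have h : ι a.succ < ι b.succ := hι (Fin.succ_lt_succ_iff.mpr hab)
          exact Fin.pred_lt_pred_iff.mpr h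
        have hcomp : ∀ k, k ∉ Set.range (fun j : Fin n => (ι j.succ).pred (hne j)) →
            (fun i => g i.succ) k = 1 := by
          intro k hk
          apply hg
          rintro ⟨j, hj⟩
          have hj0 : j ≠ 0 := by
            intro h
            rw [h, h0] at hj
            exact (Fin.succ_ne_zero k) hj.symm
          obtain ⟨j', rfl⟩ := Fin.exists_succ_eq.mpr hj0
          exact hk ⟨j', by simp [hj]⟩
        rw [List.ofFn_succ, List.ofFn_succ (f := g ∘ ι), List.prod_cons, List.prod_cons]
        have hrest := ih _ hι'mono (fun i => g i.succ) hcomp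
        rw [hrest]
        have heq : List.ofFn ((fun i => g i.succ) ∘ fun j : Fin n => (ι j.succ).pred (hne j))
            = List.ofFn fun i => (g ∘ ι) i.succ := by
          apply congrArg
          funext j
          simp [Fin.succ_pred]
        rw [heq, Function.comp_apply, h0]
      · have hne : ∀ j, ι j ≠ 0 := by
          intro j
          rcases eq_or_ne j 0 with rfl | hj
          · exact h0
          · have h : ι 0 < ι j := hι (Fin.pos_iff_ne_zero.mpr hj)
            intro hc
            rw [hc] at h
            exact (Fin.not_lt_zero _) h
        have hι'mono : StrictMono (fun j : Fin (n+1) => (ι j).pred (hne j)) := by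
          intro a b hab
          exact Fin.pred_lt_pred_iff.mpr (hι hab)
        have hg0 : g 0 = 1 := hg 0 (by rintro ⟨j, hj⟩; exact hne j hj)
        have hcomp : ∀ k, k ∉ Set.range (fun j : Fin (n+1) => (ι j).pred (hne j)) →
            (fun i => g i.succ) k = 1 := by
          intro k hk
          apply hg
          rintro ⟨j, hj⟩
          exact hk ⟨j, by simp [hj]⟩
        rw [List.ofFn_succ, List.prod_cons, hg0, one_mul]
        rw [ih _ hι'mono (fun i => g i.succ) hcomp]
        have heq : List.ofFn ((fun i => g i.succ) ∘ fun j : Fin (n+1) => (ι j).pred (hne j))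
            = List.ofFn (g ∘ ι) := by
          apply congrArg
          funext j
          simp [Fin.succ_pred]
        rw [heq]

/-- Distributing a sum over all tuples through a noncommutative `ofFn` product. -/
private lemma sum_prod_ofFn {R : Type*} [Semiring R] {Ω : Type*} [Fintype Ω] :
    ∀ (m : ℕ) (B : Fin m → Ω → R),
      ∑ φ : Fin m → Ω, (List.ofFn fun k => B k (φ k)).prod
        = (List.ofFn fun k => ∑ x, B k x).prod := by
  intro m
  induction m with
  | zero => intro B; simp
  | succ m ih =>
    intro B
    rw [← Equiv.sum_comp (Fin.consEquiv fun _ : Fin (m+1) => Ω)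
      (fun φ => (List.ofFn fun k => B k (φ k)).prod), Fintype.sum_prod_type]
    have h1 : ∀ (x : Ω) (φ' : Fin m → Ω),
        (List.ofFn fun k => B k ((Fin.consEquiv fun _ : Fin (m+1) => Ω) (x, φ') k)).prod
          = B 0 x * (List.ofFn fun k => B (Fin.succ k) (φ' k)).prod := by
      intro x φ'
      rw [List.ofFn_succ, List.prod_cons]
      simp [Fin.consEquiv]
    simp only [h1]
    rw [List.ofFn_succ, List.prod_cons, ← ih (fun k => B k.succ), Finset.sum_mul]
    exact Finset.sum_congr rfl fun x _ => by rw [Finset.mul_sum]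

/-- Summing the refined product over the fiber of a coarse outcome tuple. -/
private lemma fiber_sum_ofFn_prod {Ω : Type*} [Fintype Ω] [DecidableEq Ω]
    {R : Type*} [Semiring R] {m n : ℕ}
    (B : Fin m → Ω → R) (ι : Fin n → Fin m) (hι : StrictMono ι)
    (h1 : ∀ k, k ∉ Set.range ι → ∑ x, B k x = 1) (f : Fin n → Ω) :
    ∑ φ ∈ Finset.univ.filter (fun φ : Fin m → Ω => φ ∘ ι = f),
        (List.ofFn fun k => B k (φ k)).prod
      = (List.ofFn fun j => B (ι j) (f j)).prod := by
  classical
  set C : Fin m → Ω → R :=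
    fun k x => if ∃ j, ι j = k ∧ f j ≠ x then 0 else B k x with hC
  have step1 : ∑ φ ∈ Finset.univ.filter (fun φ : Fin m → Ω => φ ∘ ι = f),
      (List.ofFn fun k => B k (φ k)).prod
        = ∑ φ : Fin m → Ω, (List.ofFn fun k => C k (φ k)).prod := by
    rw [Finset.sum_filter]
    refine Finset.sum_congr rfl fun φ _ => ?_
    by_cases hφ : φ ∘ ι = f
    · rw [if_pos hφ]
      apply congrArg
      apply congrArg
      funext k
      rw [hC]
      refine (if_neg ?_).symm
      rintro ⟨j, rfl, hj⟩
      exact hj (congrFun hφ j).symm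
    · rw [if_neg hφ]
      have hex : ∃ j, f j ≠ φ (ι j) := by
        by_contra h
        push_neg at h
        exact hφ (funext fun j => (h j).symm)
      obtain ⟨j, hj⟩ := hex
      have hzero : C (ι j) (φ (ι j)) = 0 := if_pos ⟨j, rfl, hj⟩
      refine (List.prod_eq_zero ?_).symm
      rw [List.mem_ofFn]
      exact ⟨ι j, hzero⟩
  rw [step1, sum_prod_ofFn]
  have hone : ∀ k, k ∉ Set.range ι → (∑ x, C k x) = 1 := by
    intro k hk
    have : ∀ x, C k x = B k x := by
      intro x
      rw [hC]
      refine if_neg ?_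
      rintro ⟨j, hj, -⟩
      exact hk ⟨j, hj⟩
    simp only [this]
    exact h1 k hk
  rw [prod_ofFn_eq_of_one ι hι _ hone]
  have hfun : ((fun k => ∑ x, C k x) ∘ ι) = fun j => B (ι j) (f j) := by
    funext j
    simp only [Function.comp_apply]
    have hval : ∀ x, C (ι j) x = if x = f j then B (ι j) x else 0 := by
      intro x
      by_cases hx : x = f j
      · subst hx
        rw [if_pos rfl, hC]
        refine if_neg ?_
        rintro ⟨j', hj', hne⟩
        exact hne (congrArg f (hι.injective hj'))
      · rw [if_neg hx]
        show (if ∃ j', ι j' = ι j ∧ f j' ≠ x then 0 else B (ι j) x) = 0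
        exact if_pos ⟨j, rfl, fun h => hx h.symm⟩
    simp only [hval]
    simp
  rw [hfun]

/-- Reversed-product version of `fiber_sum_ofFn_prod`. -/
private lemma fiber_sum_ofFn_revprod {Ω : Type*} [Fintype Ω] [DecidableEq Ω]
    {R : Type*} [Semiring R] {m n : ℕ}
    (B : Fin m → Ω → R) (ι : Fin n → Fin m) (hι : StrictMono ι)
    (h1 : ∀ k, k ∉ Set.range ι → ∑ x, B k x = 1) (f : Fin n → Ω) :
    ∑ φ ∈ Finset.univ.filter (fun φ : Fin m → Ω => φ ∘ ι = f),
        (List.ofFn fun k => B k (φ k)).reverse.prod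
      = (List.ofFn fun j => B (ι j) (f j)).reverse.prod := by
  classical
  have hιr : StrictMono (fun j : Fin n => (ι j.rev).rev) := by
    intro a b hab
    exact Fin.rev_lt_rev.mpr (hι (Fin.rev_lt_rev.mpr hab))
  have h1r : ∀ k, k ∉ Set.range (fun j : Fin n => (ι j.rev).rev) →
      ∑ x, B k.rev x = 1 := by
    intro k hk
    apply h1
    rintro ⟨j, hj⟩
    exact hk ⟨j.rev, by simp [hj]⟩
  have key := fiber_sum_ofFn_prod (fun k x => B k.rev x)
    (fun j : Fin n => (ι j.rev).rev) hιr h1r (fun j => f j.rev)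
  simp only [Fin.rev_rev] at key
  -- reindex the sum over φ via φ ↦ φ ∘ Fin.rev
  have hsum : ∑ φ ∈ Finset.univ.filter
        (fun φ : Fin m → Ω => (φ ∘ fun j : Fin n => (ι j.rev).rev) = fun j => f j.rev),
        (List.ofFn fun k => B k.rev (φ k)).prod
      = ∑ φ ∈ Finset.univ.filter (fun φ : Fin m → Ω => φ ∘ ι = f),
        (List.ofFn fun k => B k (φ k)).reverse.prod := by
    rw [Finset.sum_filter, Finset.sum_filter]
    refine Fintype.sum_equiv (Equiv.arrowCongr Fin.revPerm (Equiv.refl Ω)).symm _ _ ?_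
    intro φ
    set e := (Equiv.arrowCongr Fin.revPerm (Equiv.refl Ω)).symm with he
    have happ : ∀ k, (e φ) k = φ k.rev := by
      intro k
      simp [he, Equiv.arrowCongr, Fin.revPerm]
    have hcond : ((φ ∘ fun j : Fin n => (ι j.rev).rev) = fun j => f j.rev)
        ↔ (e φ) ∘ ι = f := by
      constructor
      · intro h
        funext j
        have h2 := congrFun h j.rev
        simp only [Function.comp_apply, Fin.rev_rev] at h2
        simp [happ, h2]
      · intro h
        funext j
        have h2 := congrFun h j.rev
        simp only [Function.comp_apply, happ, Fin.rev_rev] at h2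
        simpa using h2
    have hlist : (List.ofFn fun k => B k.rev (φ k)).prod
        = (List.ofFn fun k => B k ((e φ) k)).reverse.prod := by
      rw [ofFn_reverse]
      apply congrArg
      apply congrArg
      funext k
      rw [happ, Fin.rev_rev]
    by_cases h : (φ ∘ fun j : Fin n => (ι j.rev).rev) = fun j => f j.rev
    · rw [if_pos h, if_pos (hcond.mp h), hlist]
    · rw [if_neg h, if_neg (fun hc => h (hcond.mpr hc))]
  rw [← hsum, key, ofFn_reverse]

/-- refinement monotonicity of the ℓ¹-norm of quantum bi-probabilities.
If the time mesh `τ_1 < … < τ_N` is a refinement of `t_1 < … < t_n` (witnessed by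
`ι` with `τ_{ι(j)} = t_j` and `ι` mapping the last index to the last index), then
`Σ_{f⁺,f⁻ ∈ Ω^n} |Q_{t_n,…,t_1}(f⁺,f⁻)| ≤ Σ_{φ⁺,φ⁻ ∈ Ω^N} |Q_{τ_N,…,τ_1}(φ⁺,φ⁻)|`. -/
theorem quantumBiProb_l1_le_of_refinement {d : ℕ} (hd : 1 ≤ d)
    {Ω : Type*} [Fintype Ω] [Nonempty Ω] [DecidableEq Ω]
    (ρ : Matrix (Fin d) (Fin d) ℂ) (hρ : ρ.PosSemidef) (hρtr : ρ.trace = 1)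
    (P : Ω → Matrix (Fin d) (Fin d) ℂ)
    (hPsa : ∀ f, (P f).IsHermitian) (hPidem : ∀ f, P f * P f = P f)
    (hPorth : ∀ f f', f ≠ f' → P f * P f' = 0) (hPsum : ∑ f, P f = 1)
    (U : ℝ → Matrix (Fin d) (Fin d) ℂ)
    (hU : ∀ t, U t ∈ Matrix.unitaryGroup (Fin d) ℂ)
    (n N : ℕ) (hnN : n ≤ N)
    (t : Fin (n+1) → ℝ) (ht : StrictMono t)
    (τ : Fin (N+1) → ℝ) (hτ : StrictMono τ)
    (ι : Fin (n+1) → Fin (N+1)) (hιlast : ι (Fin.last n) = Fin.last N)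
    (hιt : ∀ j, τ (ι j) = t j) :
    ∑ fp : Fin (n+1) → Ω, ∑ fm : Fin (n+1) → Ω, ‖quantumBiProb ρ P U t fp fm‖
      ≤ ∑ φp : Fin (N+1) → Ω, ∑ φm : Fin (N+1) → Ω, ‖quantumBiProb ρ P U τ φp φm‖ := by
  classical
  have hιmono : StrictMono ι := by
    intro a b hab
    have h := ht hab
    rw [← hιt a, ← hιt b] at h
    exact hτ.lt_iff_lt.mp h
  set B : Fin (N+1) → Ω → Matrix (Fin d) (Fin d) ℂ :=
    fun k x => heisenbergProj P U (τ k) x with hB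
  have h1 : ∀ k, k ∉ Set.range ι → ∑ x, B k x = 1 := by
    intro k _
    have hsum : ∑ x, B k x = (U (τ k))ᴴ * (∑ x, P x) * U (τ k) := by
      simp only [hB, heisenbergProj]
      rw [← Finset.sum_mul, ← Finset.mul_sum]
    rw [hsum, hPsum, mul_one]
    have h := (hU (τ k)).1
    rwa [Matrix.star_eq_conjTranspose] at h
  have hQ : ∀ fp fm : Fin (n+1) → Ω,
      quantumBiProb ρ P U t fp fm
        = ∑ φp ∈ Finset.univ.filter (fun φ : Fin (N+1) → Ω => φ ∘ ι = fp),
            ∑ φm ∈ Finset.univ.filter (fun φ : Fin (N+1) → Ω => φ ∘ ι = fm),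
              quantumBiProb ρ P U τ φp φm := by
    intro fp fm
    have hplus := fiber_sum_ofFn_revprod B ι hιmono h1 fp
    have hminus := fiber_sum_ofFn_prod B ι hιmono h1 fm
    have hlt : ∀ (f : Fin (n+1) → Ω) (j : Fin (n+1)),
        heisenbergProj P U (t j) (f j) = B (ι j) (f j) := by
      intro f j
      show heisenbergProj P U (t j) (f j) = heisenbergProj P U (τ (ι j)) (f j)
      rw [hιt j]
    simp only [quantumBiProb]
    simp only [hlt]
    rw [← hplus, ← hminus]
    simp only [Finset.sum_mul, Finset.mul_sum, Matrix.trace_sum]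
    rw [Finset.sum_comm]
  calc ∑ fp : Fin (n+1) → Ω, ∑ fm : Fin (n+1) → Ω, ‖quantumBiProb ρ P U t fp fm‖
      ≤ ∑ fp : Fin (n+1) → Ω, ∑ fm : Fin (n+1) → Ω,
          ∑ φp ∈ Finset.univ.filter (fun φ : Fin (N+1) → Ω => φ ∘ ι = fp),
            ∑ φm ∈ Finset.univ.filter (fun φ : Fin (N+1) → Ω => φ ∘ ι = fm),
              ‖quantumBiProb ρ P U τ φp φm‖ := by
        refine Finset.sum_le_sum fun fp _ => Finset.sum_le_sum fun fm _ => ?_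
        rw [hQ]
        refine (norm_sum_le _ _).trans ?_
        exact Finset.sum_le_sum fun φp _ => norm_sum_le _ _
    _ = ∑ φp : Fin (N+1) → Ω, ∑ φm : Fin (N+1) → Ω, ‖quantumBiProb ρ P U τ φp φm‖ := by
        have hswap : ∀ fp : Fin (n+1) → Ω,
            ∑ fm : Fin (n+1) → Ω,
              ∑ φp ∈ Finset.univ.filter (fun φ : Fin (N+1) → Ω => φ ∘ ι = fp),
                ∑ φm ∈ Finset.univ.filter (fun φ : Fin (N+1) → Ω => φ ∘ ι = fm),
                  ‖quantumBiProb ρ P U τ φp φm‖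
              = ∑ φp ∈ Finset.univ.filter (fun φ : Fin (N+1) → Ω => φ ∘ ι = fp),
                  ∑ fm : Fin (n+1) → Ω,
                    ∑ φm ∈ Finset.univ.filter (fun φ : Fin (N+1) → Ω => φ ∘ ι = fm),
                      ‖quantumBiProb ρ P U τ φp φm‖ := by
          intro fp
          exact Finset.sum_comm
        simp only [hswap]
        have hinner : ∀ φp : Fin (N+1) → Ω,
            ∑ fm : Fin (n+1) → Ω,
              ∑ φm ∈ Finset.univ.filter (fun φ : Fin (N+1) → Ω => φ ∘ ι = fm),
                ‖quantumBiProb ρ P U τ φp φm‖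
              = ∑ φm : Fin (N+1) → Ω, ‖quantumBiProb ρ P U τ φp φm‖ := by
          intro φp
          exact Finset.sum_fiberwise _ _ _
        simp only [hinner]
        exact Finset.sum_fiberwise _ _ _
end

section
/- Let d ∈ ℕ, d ≥ 1, ρ a density matrix on ℂ^d, {P(f)}_{f∈Ω} a PVM on a nonempty finite set Ω, and U : ℝ → M_d(ℂ) a family of unitary matrices. Then the quantum bi-probabilities satisfy causality: for every n ∈ ℕ, all times t_1 < … < t_n, and all f⁺, f⁻ ∈ Ω^n with f_n⁺ ≠ f_n⁻ one has Q_{t_n,…,t_1}(f⁺,f⁻) = 0. -/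
open Matrix
open scoped ComplexOrder

/-! The two outermost factors of `Q`, `P_{t_n}(f_n⁺)` on the left and `P_{t_n}(f_n⁻)` on the
right, are brought next to each other by cyclicity of the trace; their product is
`U(t_n)* P(f_n⁻) P(f_n⁺) U(t_n) = 0` by orthogonality of the PVM. -/

theorem Unitary.star_mul_mul_mul_star_mul_mul {R : Type*} [Monoid R] [StarMul R] {U : R}
    (hU : U ∈ unitary R) (a b : R) :
    star U * a * U * (star U * b * U) = star U * (a * b) * U := by
  simp only [mul_assoc, ← mul_assoc U, Unitary.mul_star_self_of_mem hU, one_mul]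

theorem heisenbergProj_mul_heisenbergProj {d : ℕ} {Ω : Type*}
    {P : Ω → Matrix (Fin d) (Fin d) ℂ} {U : ℝ → Matrix (Fin d) (Fin d) ℂ} {t : ℝ}
    (hU : U t ∈ Matrix.unitaryGroup (Fin d) ℂ) (f f' : Ω) :
    heisenbergProj P U t f * heisenbergProj P U t f' = (U t)ᴴ * (P f * P f') * U t :=
  Unitary.star_mul_mul_mul_star_mul_mul hU _ _

theorem List.reverse_prod_ofFn_succ {M : Type*} [Monoid M] {n : ℕ} (g : Fin (n + 1) → M) :
    (List.ofFn g).reverse.prod = g (Fin.last n) * (List.ofFn (Fin.init g)).reverse.prod := by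
  rw [List.ofFn_succ', List.concat_eq_append, List.reverse_concat', List.prod_cons]
  rfl

theorem List.prod_ofFn_succ {M : Type*} [Monoid M] {n : ℕ} (g : Fin (n + 1) → M) :
    (List.ofFn g).prod = (List.ofFn (Fin.init g)).prod * g (Fin.last n) := by
  rw [List.ofFn_succ', List.concat_eq_append, List.prod_append, List.prod_singleton]
  rfl

theorem Matrix.trace_mul_mul_eq_zero_of_mul_eq_zero {m : Type*} [Fintype m] {R : Type*}
    [CommSemiring R] {X A Y : Matrix m m R} (h : Y * X = 0) : (X * A * Y).trace = 0 := by
  rw [Matrix.trace_mul_cycle, h, zero_mul, Matrix.trace_zero]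

theorem quantumBiProb_causality_general {d : ℕ}
    {Ω : Type*}
    (ρ : Matrix (Fin d) (Fin d) ℂ)
    (P : Ω → Matrix (Fin d) (Fin d) ℂ)
    (hPorth : ∀ f f', f ≠ f' → P f * P f' = 0)
    (U : ℝ → Matrix (Fin d) (Fin d) ℂ)
    (hU : ∀ t, U t ∈ Matrix.unitaryGroup (Fin d) ℂ)
    (n : ℕ) (t : Fin (n+1) → ℝ)
    (fp fm : Fin (n+1) → Ω) (hne : fp (Fin.last n) ≠ fm (Fin.last n)) :
    quantumBiProb ρ P U t fp fm = 0 := by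
  set X := heisenbergProj P U (t (Fin.last n)) (fp (Fin.last n))
  set Y := heisenbergProj P U (t (Fin.last n)) (fm (Fin.last n))
  have hYX : Y * X = 0 := by
    rw [heisenbergProj_mul_heisenbergProj (hU _), hPorth _ _ hne.symm, Matrix.mul_zero,
      Matrix.zero_mul]
  have hQ : quantumBiProb ρ P U t fp fm =
      (X * ((List.ofFn (Fin.init fun j => heisenbergProj P U (t j) (fp j))).reverse.prod * ρ *
        (List.ofFn (Fin.init fun j => heisenbergProj P U (t j) (fm j))).prod) * Y).trace := by
    rw [quantumBiProb, List.reverse_prod_ofFn_succ, List.prod_ofFn_succ]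
    simp only [Matrix.mul_assoc, X, Y]
  rw [hQ, Matrix.trace_mul_mul_eq_zero_of_mul_eq_zero hYX]

/-- causality of quantum bi-probabilities: if the outcomes at the latest
time differ, `f_n⁺ ≠ f_n⁻`, then `Q_{t_n,…,t_1}(f⁺,f⁻) = 0`. -/
theorem quantumBiProb_causality {d : ℕ} (hd : 1 ≤ d)
    {Ω : Type*} [Fintype Ω] [Nonempty Ω] [DecidableEq Ω]
    (ρ : Matrix (Fin d) (Fin d) ℂ) (hρ : ρ.PosSemidef) (hρtr : ρ.trace = 1)
    (P : Ω → Matrix (Fin d) (Fin d) ℂ)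
    (hPsa : ∀ f, (P f).IsHermitian) (hPidem : ∀ f, P f * P f = P f)
    (hPorth : ∀ f f', f ≠ f' → P f * P f' = 0) (hPsum : ∑ f, P f = 1)
    (U : ℝ → Matrix (Fin d) (Fin d) ℂ)
    (hU : ∀ t, U t ∈ Matrix.unitaryGroup (Fin d) ℂ)
    (n : ℕ) (t : Fin (n+1) → ℝ) (ht : StrictMono t)
    (fp fm : Fin (n+1) → Ω) (hne : fp (Fin.last n) ≠ fm (Fin.last n)) :
    quantumBiProb ρ P U t fp fm = 0 :=
  quantumBiProb_causality_general ρ P hPorth U hU n t fp fm hne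
end

section
/- Let d ∈ ℕ, d ≥ 1, ρ a density matrix on ℂ^d, {P(f)}_{f∈Ω} a PVM on a nonempty finite set Ω, and U : ℝ → M_d(ℂ) a family of unitary matrices. Then the quantum bi-probabilities are positive semidefinite: for every n ∈ ℕ, all times t_1 < … < t_n, and every function Z : Ω^n → ℂ, the number Σ_{f⁺,f⁻ ∈ Ω^n} Z(f⁺) · Q_{t_n,…,t_1}(f⁺,f⁻) · conj(Z(f⁻)) is real and nonnegative. -/
/-!
Writing `A(f) = P_{t_n}(f_n)⋯P_{t_1}(f_1)`, self-adjointness of the `P_t(f)` gives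
`A(f)ᴴ = P_{t_1}(f_1)⋯P_{t_n}(f_n)`, so `Q(f⁺,f⁻) = tr[A(f⁺) ρ A(f⁻)ᴴ]`. The double sum is then
`tr[M ρ Mᴴ]` with `M = Σ_f Z(f) A(f)`, the trace of a positive semidefinite matrix.
-/

open Matrix
open scoped ComplexOrder

theorem List.star_prod_reverse_of_isSelfAdjoint {R : Type*} [Monoid R] [StarMul R] {l : List R}
    (hl : ∀ x ∈ l, IsSelfAdjoint x) : star l.reverse.prod = l.prod := by
  induction l with
  | nil => exact star_one R
  | cons a l ih =>
    rw [List.forall_mem_cons] at hl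
    rw [List.reverse_cons, List.prod_append, star_mul, List.prod_singleton, hl.1.star_eq,
      ih hl.2, List.prod_cons]

namespace Matrix

variable {n ι R : Type*} [Fintype n] [Fintype ι] [CommRing R] [StarRing R]

theorem sum_sum_mul_trace_mul_star_eq (ρ : Matrix n n R) (A : ι → Matrix n n R) (z : ι → R) :
    ∑ i, ∑ j, z i * trace (A i * ρ * (A j)ᴴ) * starRingEnd R (z j) =
      trace ((∑ i, z i • A i) * ρ * (∑ i, z i • A i)ᴴ) := by
  simp only [conjTranspose_sum, conjTranspose_smul, Matrix.sum_mul,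
    Matrix.smul_mul, Matrix.mul_smul, trace_sum, trace_smul, smul_eq_mul, Finset.mul_sum]
  rw [Finset.sum_comm]
  refine Finset.sum_congr rfl fun i _ => Finset.sum_congr rfl fun j _ => ?_
  simp only [starRingEnd_apply]
  ring

theorem PosSemidef.sum_sum_mul_trace_mul_star_nonneg [PartialOrder R] [AddLeftMono R]
    {ρ : Matrix n n R} (hρ : ρ.PosSemidef) (A : ι → Matrix n n R) (z : ι → R) :
    0 ≤ ∑ i, ∑ j, z i * trace (A i * ρ * (A j)ᴴ) * starRingEnd R (z j) := by
  rw [sum_sum_mul_trace_mul_star_eq]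
  exact (hρ.mul_mul_conjTranspose_same _).trace_nonneg

end Matrix

noncomputable def timeOrderedProj {d : ℕ} {Ω : Type*}
    (P : Ω → Matrix (Fin d) (Fin d) ℂ) (U : ℝ → Matrix (Fin d) (Fin d) ℂ) {n : ℕ}
    (t : Fin n → ℝ) (f : Fin n → Ω) : Matrix (Fin d) (Fin d) ℂ :=
  (List.ofFn fun j => heisenbergProj P U (t j) (f j)).reverse.prod

theorem isHermitian_heisenbergProj {d : ℕ} {Ω : Type*} {P : Ω → Matrix (Fin d) (Fin d) ℂ}
    (hP : ∀ f, (P f).IsHermitian) (U : ℝ → Matrix (Fin d) (Fin d) ℂ) (s : ℝ) (f : Ω) :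
    (heisenbergProj P U s f).IsHermitian :=
  isHermitian_conjTranspose_mul_mul _ (hP f)

theorem quantumBiProb_eq_trace {d : ℕ} {Ω : Type*} (ρ : Matrix (Fin d) (Fin d) ℂ)
    {P : Ω → Matrix (Fin d) (Fin d) ℂ} (hP : ∀ f, (P f).IsHermitian)
    (U : ℝ → Matrix (Fin d) (Fin d) ℂ) {n : ℕ} (t : Fin n → ℝ) (fp fm : Fin n → Ω) :
    quantumBiProb ρ P U t fp fm =
      trace (timeOrderedProj P U t fp * ρ * (timeOrderedProj P U t fm)ᴴ) := by
  rw [← star_eq_conjTranspose, timeOrderedProj, timeOrderedProj,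
    List.star_prod_reverse_of_isSelfAdjoint]
  · rfl
  · simp only [List.mem_ofFn, forall_exists_index]
    rintro _ j rfl
    exact isHermitian_heisenbergProj hP U _ _

theorem quantumBiProb_posSemidef_general {d : ℕ}
    {Ω : Type*} [Fintype Ω]
    (ρ : Matrix (Fin d) (Fin d) ℂ) (hρ : ρ.PosSemidef)
    (P : Ω → Matrix (Fin d) (Fin d) ℂ)
    (hPsa : ∀ f, (P f).IsHermitian)
    (U : ℝ → Matrix (Fin d) (Fin d) ℂ)
    (n : ℕ) (t : Fin n → ℝ) (Z : (Fin n → Ω) → ℂ) :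
    0 ≤ ∑ fp : Fin n → Ω, ∑ fm : Fin n → Ω,
      Z fp * quantumBiProb ρ P U t fp fm * (starRingEnd ℂ) (Z fm) := by
  simp only [quantumBiProb_eq_trace ρ hPsa]
  exact hρ.sum_sum_mul_trace_mul_star_nonneg _ Z

/-- positive semidefiniteness of the quantum bi-probabilities:
`Σ_{f⁺,f⁻} Z(f⁺) Q(f⁺,f⁻) conj(Z(f⁻))` is real and nonnegative (here expressed using
the partial order on `ℂ`, for which `0 ≤ z` iff `z` is a nonnegative real number). -/
theorem quantumBiProb_posSemidef {d : ℕ} (hd : 1 ≤ d)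
    {Ω : Type*} [Fintype Ω] [Nonempty Ω] [DecidableEq Ω]
    (ρ : Matrix (Fin d) (Fin d) ℂ) (hρ : ρ.PosSemidef) (hρtr : ρ.trace = 1)
    (P : Ω → Matrix (Fin d) (Fin d) ℂ)
    (hPsa : ∀ f, (P f).IsHermitian) (hPidem : ∀ f, P f * P f = P f)
    (hPorth : ∀ f f', f ≠ f' → P f * P f' = 0) (hPsum : ∑ f, P f = 1)
    (U : ℝ → Matrix (Fin d) (Fin d) ℂ)
    (hU : ∀ t, U t ∈ Matrix.unitaryGroup (Fin d) ℂ)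
    (n : ℕ) (t : Fin n → ℝ) (ht : StrictMono t) (Z : (Fin n → Ω) → ℂ) :
    0 ≤ ∑ fp : Fin n → Ω, ∑ fm : Fin n → Ω,
      Z fp * quantumBiProb ρ P U t fp fm * (starRingEnd ℂ) (Z fm) :=
  quantumBiProb_posSemidef_general ρ hρ P hPsa U n t Z
end

section
/- Let d ∈ ℕ, d ≥ 1, ρ a density matrix on ℂ^d, {P(f)}_{f∈Ω} a PVM on a nonempty finite set Ω, and U : ℝ → M_d(ℂ) a family of unitary matrices. Then the quantum bi-probabilities are bi-consistent: for every n ∈ ℕ, all times t_1 < … < t_n, every j ∈ {1,…,n}, and all fixed f_i⁺, f_i⁻ ∈ Ω (i ≠ j): Σ_{f_j⁺,f_j⁻ ∈ Ω} Q_{t_n,…,t_1}(f⁺,f⁻) = Q_{t_n,…,t_{j+1},t_{j−1},…,t_1}(f⁺ with the j-th entry deleted, f⁻ with the j-th entry deleted). -/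
open Matrix
open scoped ComplexOrder

section Aux
variable {R : Type*} [Semiring R] {Ω : Type*} [Fintype Ω]

lemma sum_prod_ofFn_update (x : Ω → R) (hx : ∑ a, x a = 1) :
    ∀ (n : ℕ) (j : Fin (n+1)) (g : Fin (n+1) → R),
      ∑ a, (List.ofFn (Function.update g j (x a))).prod
        = (List.ofFn (g ∘ j.succAbove)).prod := by
  intro n
  induction n with
  | zero =>
    intro j g
    have hj : j = 0 := Fin.eq_zero j
    subst hj
    simp [List.ofFn_succ, hx]
  | succ m ih =>
    intro j g
    induction j using Fin.cases with
    | zero =>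
      have h1 : ∀ a : Ω, (List.ofFn (Function.update g 0 (x a))).prod
          = x a * (List.ofFn (g ∘ Fin.succ)).prod := by
        intro a
        rw [List.ofFn_succ]
        simp [Function.update_of_ne (Fin.succ_ne_zero _)]
      simp only [h1, ← Finset.sum_mul, hx, one_mul, Fin.succAbove_zero]
    | succ k =>
      have h1 : ∀ a : Ω, (List.ofFn (Function.update g k.succ (x a))).prod
          = g 0 * (List.ofFn (Function.update (g ∘ Fin.succ) k (x a))).prod := by
        intro a
        rw [List.ofFn_succ]
        have h2 : (fun i : Fin (m+1) => Function.update g k.succ (x a) i.succ)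
            = Function.update (g ∘ Fin.succ) k (x a) := by
          funext i
          by_cases h : i = k
          · subst h; simp
          · rw [Function.update_of_ne h,
              Function.update_of_ne (fun hc => h (Fin.succ_injective _ hc))]
            rfl
        rw [h2]
        simp [Function.update_of_ne (Fin.succ_ne_zero k).symm]
      rw [Finset.sum_congr rfl (fun a _ => h1 a), ← Finset.mul_sum, ih k (g ∘ Fin.succ)]
      rw [List.ofFn_succ]
      simp only [Function.comp_apply, Fin.succ_succAbove_zero, Fin.succ_succAbove_succ]
      rfl

lemma sum_prod_ofFn_update_rev (x : Ω → R) (hx : ∑ a, x a = 1) :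
    ∀ (n : ℕ) (j : Fin (n+1)) (g : Fin (n+1) → R),
      ∑ a, (List.ofFn (Function.update g j (x a))).reverse.prod
        = (List.ofFn (g ∘ j.succAbove)).reverse.prod := by
  intro n
  induction n with
  | zero =>
    intro j g
    have hj : j = 0 := Fin.eq_zero j
    subst hj
    simp [List.ofFn_succ, hx]
  | succ m ih =>
    intro j g
    induction j using Fin.cases with
    | zero =>
      have h1 : ∀ a : Ω, (List.ofFn (Function.update g 0 (x a))).reverse.prod
          = (List.ofFn (g ∘ Fin.succ)).reverse.prod * x a := by
        intro a
        rw [List.ofFn_succ]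
        simp [Function.update_of_ne (Fin.succ_ne_zero _), mul_assoc]
      simp only [h1, ← Finset.sum_mul, ← Finset.mul_sum, hx, mul_one, Fin.succAbove_zero]
    | succ k =>
      have h1 : ∀ a : Ω, (List.ofFn (Function.update g k.succ (x a))).reverse.prod
          = (List.ofFn (Function.update (g ∘ Fin.succ) k (x a))).reverse.prod * g 0 := by
        intro a
        rw [List.ofFn_succ]
        have h2 : (fun i : Fin (m+1) => Function.update g k.succ (x a) i.succ)
            = Function.update (g ∘ Fin.succ) k (x a) := by
          funext i
          by_cases h : i = k
          · subst h; simp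
          · rw [Function.update_of_ne h,
              Function.update_of_ne (fun hc => h (Fin.succ_injective _ hc))]
            rfl
        rw [h2]
        simp [Function.update_of_ne (Fin.succ_ne_zero k).symm, mul_assoc]
      rw [Finset.sum_congr rfl (fun a _ => h1 a), ← Finset.sum_mul, ih k (g ∘ Fin.succ)]
      rw [List.ofFn_succ]
      simp only [Function.comp_apply, Fin.succ_succAbove_zero, Fin.succ_succAbove_succ,
        List.reverse_cons, List.prod_append, List.prod_cons, List.prod_nil, mul_one]
      rfl

end Aux

/-- bi-consistency of the quantum bi-probabilities: summing over the pair of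
outcomes at the `j`-th time yields the bi-probability with the `j`-th time deleted. -/
theorem quantumBiProb_biConsistent {d : ℕ} (hd : 1 ≤ d)
    {Ω : Type*} [Fintype Ω] [Nonempty Ω] [DecidableEq Ω]
    (ρ : Matrix (Fin d) (Fin d) ℂ) (hρ : ρ.PosSemidef) (hρtr : ρ.trace = 1)
    (P : Ω → Matrix (Fin d) (Fin d) ℂ)
    (hPsa : ∀ f, (P f).IsHermitian) (hPidem : ∀ f, P f * P f = P f)
    (hPorth : ∀ f f', f ≠ f' → P f * P f' = 0) (hPsum : ∑ f, P f = 1)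
    (U : ℝ → Matrix (Fin d) (Fin d) ℂ)
    (hU : ∀ t, U t ∈ Matrix.unitaryGroup (Fin d) ℂ)
    (n : ℕ) (t : Fin (n+1) → ℝ) (ht : StrictMono t) (j : Fin (n+1))
    (fp fm : Fin (n+1) → Ω) :
    ∑ a : Ω, ∑ b : Ω,
        quantumBiProb ρ P U t (Function.update fp j a) (Function.update fm j b)
      = quantumBiProb ρ P U (t ∘ j.succAbove) (fp ∘ j.succAbove) (fm ∘ j.succAbove) := by
  simp only [quantumBiProb, heisenbergProj]
  set G : Fin (n+1) → Matrix (Fin d) (Fin d) ℂ := fun i => (U (t i))ᴴ * P (fp i) * U (t i) with hG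
  set G' : Fin (n+1) → Matrix (Fin d) (Fin d) ℂ := fun i => (U (t i))ᴴ * P (fm i) * U (t i) with hG'
  set X : Ω → Matrix (Fin d) (Fin d) ℂ := fun a => (U (t j))ᴴ * P a * U (t j) with hX
  have hXsum : ∑ a, X a = 1 := by
    have : ∑ a, X a = (U (t j))ᴴ * (∑ a, P a) * U (t j) := by
      simp [hX, Finset.mul_sum, Finset.sum_mul]
    rw [this, hPsum, mul_one, ← Matrix.star_eq_conjTranspose,
      (Matrix.mem_unitaryGroup_iff'.mp (hU (t j)))]
  have hfp : ∀ a, (fun i => (U (t i))ᴴ * P (Function.update fp j a i) * U (t i))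
      = Function.update G j (X a) := by
    intro a; funext i
    by_cases h : i = j
    · subst h; simp [hX]
    · rw [Function.update_of_ne h, Function.update_of_ne h, hG]
  have hfm : ∀ b, (fun i => (U (t i))ᴴ * P (Function.update fm j b i) * U (t i))
      = Function.update G' j (X b) := by
    intro b; funext i
    by_cases h : i = j
    · subst h; simp [hX]
    · rw [Function.update_of_ne h, Function.update_of_ne h, hG']
  simp only [hfp, hfm]
  have e1 : ∀ a, ∑ b, Matrix.trace ((List.ofFn (Function.update G j (X a))).reverse.prod * ρ *
      (List.ofFn (Function.update G' j (X b))).prod)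
      = Matrix.trace ((List.ofFn (Function.update G j (X a))).reverse.prod * ρ *
        (List.ofFn (G' ∘ j.succAbove)).prod) := by
    intro a
    rw [← sum_prod_ofFn_update X hXsum n j G', Finset.mul_sum, Matrix.trace_sum]
  rw [Finset.sum_congr rfl (fun a _ => e1 a)]
  rw [show ∀ S, ∑ a, Matrix.trace ((List.ofFn (Function.update G j (X a))).reverse.prod * ρ * S)
      = Matrix.trace ((∑ a, (List.ofFn (Function.update G j (X a))).reverse.prod) * ρ * S) from
    fun S => by rw [Finset.sum_mul, Finset.sum_mul, Matrix.trace_sum]]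
  rw [sum_prod_ofFn_update_rev X hXsum n j G]
  rfl
end

section
/- Let d ∈ ℕ, d ≥ 1, ρ a density matrix on ℂ^d, {P(f)}_{f∈Ω} a PVM on a nonempty finite set Ω, and U : ℝ → M_d(ℂ) a family of unitary matrices. Then for every n ∈ ℕ, all times t_1 < … < t_n, every j ∈ {1,…,n}, and all fixed f_i ∈ Ω (i ≠ j), the violation of Kolmogorov consistency is given exactly by the off-diagonal bi-probabilities: P_{t_n,…,t_{j+1},t_{j−1},…,t_1}(f_n,…,f_{j+1},f_{j−1},…,f_1) − Σ_{f_j ∈ Ω} P_{t_n,…,t_1}(f_n,…,f_j,…,f_1) = Σ_{f_j⁺ ≠ f_j⁻ ∈ Ω} Q_{t_n,…,t_1}(f⁺,f⁻), where f⁺ and f⁻ agree with (f_n,…,f_1) in all entries except the j-th, in which they equal f_j⁺ and f_j⁻ respectively. -/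
open Matrix
open scoped ComplexOrder

lemma sum_update_listProd {R : Type*} [Semiring R] {Ω : Type*} [Fintype Ω] [DecidableEq Ω] :
    ∀ {n : ℕ} (g : Fin (n+1) → R) (j : Fin (n+1)) (h : Ω → R), (∑ a, h a) = 1 →
    ∑ a, (List.ofFn (Function.update g j (h a))).prod
      = (List.ofFn (g ∘ j.succAbove)).prod := by
  intro n
  induction n with
  | zero =>
    intro g j h hsum
    fin_cases j
    simpa using hsum
  | succ n ih =>
    intro g j h hsum
    induction j using Fin.cases with
    | zero =>
      have key : ∀ a : Ω, (List.ofFn (Function.update g 0 (h a))).prod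
          = h a * (List.ofFn (fun i : Fin (n+1) => g i.succ)).prod := by
        intro a
        have hfe : (fun i : Fin (n+1) => Function.update g 0 (h a) i.succ)
            = fun i => g i.succ :=
          funext fun i => Function.update_of_ne (Fin.succ_ne_zero i) _ _
        rw [List.ofFn_succ, List.prod_cons, Function.update_self, hfe]
      have hfe0 : (g ∘ (0 : Fin (n+2)).succAbove) = fun i : Fin (n+1) => g i.succ := by
        funext i; simp [Fin.succAbove_zero]
      rw [Finset.sum_congr rfl (fun a _ => key a), ← Finset.sum_mul, hsum, one_mul, hfe0]
    | succ j' =>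
      have key : ∀ a : Ω, (List.ofFn (Function.update g j'.succ (h a))).prod
          = g 0 * (List.ofFn (Function.update (g ∘ Fin.succ) j' (h a))).prod := by
        intro a
        have hfe : (fun i : Fin (n+1) => Function.update g j'.succ (h a) i.succ)
            = Function.update (g ∘ Fin.succ) j' (h a) := by
          funext i
          rcases eq_or_ne i j' with rfl | hne
          · simp
          · rw [Function.update_of_ne hne,
              Function.update_of_ne (fun hc => hne (Fin.succ_injective _ hc))]
            rfl
        rw [List.ofFn_succ, List.prod_cons,
          Function.update_of_ne (Fin.succ_ne_zero j').symm, hfe]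
      have hfe2 : (fun i : Fin n => (g ∘ j'.succ.succAbove) i.succ)
          = (g ∘ Fin.succ) ∘ j'.succAbove := by
        funext i; simp [Fin.succ_succAbove_succ]
      have hfe3 : (g ∘ j'.succ.succAbove) 0 = g 0 := by
        simp [Fin.succ_succAbove_zero]
      rw [Finset.sum_congr rfl (fun a _ => key a), ← Finset.mul_sum, ih _ j' h hsum,
        List.ofFn_succ, List.prod_cons, hfe2, hfe3]

lemma sum_update_listProdRev {R : Type*} [Semiring R] {Ω : Type*} [Fintype Ω] [DecidableEq Ω] :
    ∀ {n : ℕ} (g : Fin (n+1) → R) (j : Fin (n+1)) (h : Ω → R), (∑ a, h a) = 1 →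
    ∑ a, (List.ofFn (Function.update g j (h a))).reverse.prod
      = (List.ofFn (g ∘ j.succAbove)).reverse.prod := by
  intro n
  induction n with
  | zero =>
    intro g j h hsum
    fin_cases j
    simpa using hsum
  | succ n ih =>
    intro g j h hsum
    induction j using Fin.cases with
    | zero =>
      have key : ∀ a : Ω, (List.ofFn (Function.update g 0 (h a))).reverse.prod
          = (List.ofFn (fun i : Fin (n+1) => g i.succ)).reverse.prod * h a := by
        intro a
        have hfe : (fun i : Fin (n+1) => Function.update g 0 (h a) i.succ)
            = fun i => g i.succ :=
          funext fun i => Function.update_of_ne (Fin.succ_ne_zero i) _ _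
        rw [List.ofFn_succ, List.reverse_cons, List.prod_append, List.prod_cons,
          List.prod_nil, Function.update_self, mul_one, hfe]
      have hfe0 : (g ∘ (0 : Fin (n+2)).succAbove) = fun i : Fin (n+1) => g i.succ := by
        funext i; simp [Fin.succAbove_zero]
      rw [Finset.sum_congr rfl (fun a _ => key a), ← Finset.mul_sum, hsum, mul_one, hfe0]
    | succ j' =>
      have key : ∀ a : Ω, (List.ofFn (Function.update g j'.succ (h a))).reverse.prod
          = (List.ofFn (Function.update (g ∘ Fin.succ) j' (h a))).reverse.prod * g 0 := by
        intro a
        have hfe : (fun i : Fin (n+1) => Function.update g j'.succ (h a) i.succ)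
            = Function.update (g ∘ Fin.succ) j' (h a) := by
          funext i
          rcases eq_or_ne i j' with rfl | hne
          · simp
          · rw [Function.update_of_ne hne,
              Function.update_of_ne (fun hc => hne (Fin.succ_injective _ hc))]
            rfl
        rw [List.ofFn_succ, List.reverse_cons, List.prod_append, List.prod_cons,
          List.prod_nil, Function.update_of_ne (Fin.succ_ne_zero j').symm, mul_one, hfe]
      have hfe2 : (fun i : Fin n => (g ∘ j'.succ.succAbove) i.succ)
          = (g ∘ Fin.succ) ∘ j'.succAbove := by
        funext i; simp [Fin.succ_succAbove_succ]
      have hfe3 : (g ∘ j'.succ.succAbove) 0 = g 0 := by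
        simp [Fin.succ_succAbove_zero]
      rw [Finset.sum_congr rfl (fun a _ => key a), ← Finset.sum_mul, ih _ j' h hsum,
        List.ofFn_succ, List.reverse_cons, List.prod_append, List.prod_cons,
        List.prod_nil, mul_one, hfe2, hfe3]

/-- the violation of Kolmogorov consistency by the multitime probabilities
`P_{t_n,…,t_1}(f) = Q_{t_n,…,t_1}(f,f)` equals the sum of off-diagonal bi-probabilities at
the deleted time. -/
theorem quantumProb_inconsistency {d : ℕ} (hd : 1 ≤ d)
    {Ω : Type*} [Fintype Ω] [Nonempty Ω] [DecidableEq Ω]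
    (ρ : Matrix (Fin d) (Fin d) ℂ) (hρ : ρ.PosSemidef) (hρtr : ρ.trace = 1)
    (P : Ω → Matrix (Fin d) (Fin d) ℂ)
    (hPsa : ∀ f, (P f).IsHermitian) (hPidem : ∀ f, P f * P f = P f)
    (hPorth : ∀ f f', f ≠ f' → P f * P f' = 0) (hPsum : ∑ f, P f = 1)
    (U : ℝ → Matrix (Fin d) (Fin d) ℂ)
    (hU : ∀ t, U t ∈ Matrix.unitaryGroup (Fin d) ℂ)
    (n : ℕ) (t : Fin (n+1) → ℝ) (ht : StrictMono t) (j : Fin (n+1)) (f : Fin (n+1) → Ω) :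
    quantumBiProb ρ P U (t ∘ j.succAbove) (f ∘ j.succAbove) (f ∘ j.succAbove)
        - ∑ a : Ω, quantumBiProb ρ P U t (Function.update f j a) (Function.update f j a)
      = ∑ a : Ω, ∑ b : Ω,
          if a = b then 0
          else quantumBiProb ρ P U t (Function.update f j a) (Function.update f j b) := by
  classical
  set g : Fin (n+1) → Matrix (Fin d) (Fin d) ℂ :=
    fun i => heisenbergProj P U (t i) (f i) with hg
  set h : Ω → Matrix (Fin d) (Fin d) ℂ :=
    fun a => heisenbergProj P U (t j) a with hh
  have hsum : (∑ a, h a) = 1 := by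
    simp only [hh, heisenbergProj]
    rw [← Finset.sum_mul, ← Finset.mul_sum, hPsum, mul_one]
    exact (hU (t j)).1
  have hfun : ∀ a : Ω,
      (fun i => heisenbergProj P U (t i) (Function.update f j a i))
        = Function.update g j (h a) := by
    intro a
    funext i
    rcases eq_or_ne i j with rfl | hne
    · simp [hg, hh]
    · rw [Function.update_of_ne hne, Function.update_of_ne hne]
  have hfun' : (fun i => heisenbergProj P U ((t ∘ j.succAbove) i) ((f ∘ j.succAbove) i))
      = g ∘ j.succAbove := rfl
  -- abbreviations
  set Q : Ω → Ω → ℂ :=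
    fun a b => quantumBiProb ρ P U t (Function.update f j a) (Function.update f j b) with hQ
  have key : ∑ a : Ω, ∑ b : Ω, Q a b
      = quantumBiProb ρ P U (t ∘ j.succAbove) (f ∘ j.succAbove) (f ∘ j.succAbove) := by
    simp only [hQ, quantumBiProb, hfun, hfun']
    rw [← sum_update_listProdRev g j h hsum, ← sum_update_listProd g j h hsum,
      Finset.sum_mul, Finset.sum_mul_sum, Matrix.trace_sum]
    exact Finset.sum_congr rfl fun a _ => (Matrix.trace_sum _ _).symm
  have diag : ∀ a : Ω, ∑ b : Ω, (if a = b then 0 else Q a b)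
      = (∑ b : Ω, Q a b) - Q a a := by
    intro a
    have h1 : ∑ b : Ω, (if a = b then Q a b else 0) = Q a a := by
      simp [Finset.sum_ite_eq]
    calc ∑ b : Ω, (if a = b then 0 else Q a b)
        = ∑ b : Ω, (Q a b - if a = b then Q a b else 0) := by
          refine Finset.sum_congr rfl fun b _ => ?_
          split <;> simp
      _ = (∑ b : Ω, Q a b) - Q a a := by rw [Finset.sum_sub_distrib, h1]
  calc quantumBiProb ρ P U (t ∘ j.succAbove) (f ∘ j.succAbove) (f ∘ j.succAbove)
        - ∑ a : Ω, Q a a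
      = (∑ a : Ω, ∑ b : Ω, Q a b) - ∑ a : Ω, Q a a := by rw [key]
    _ = ∑ a : Ω, ((∑ b : Ω, Q a b) - Q a a) := by rw [Finset.sum_sub_distrib]
    _ = ∑ a : Ω, ∑ b : Ω, (if a = b then 0 else Q a b) := by
          refine Finset.sum_congr rfl fun a _ => (diag a).symm
end

section
/- Let d ∈ ℕ, d ≥ 1, and let γ : [0,1] → M_d(ℂ) be a differentiable path of unitary matrices with Length(γ) := ∫₀¹ ‖γ'(τ)‖_op dτ < ∞. For unitaries Û_1,…,Û_n and indices k⁺, k⁻ ∈ {1,…,d}^n, define the generic bi-probability Q_{Û_n,…,Û_1}(k⁺,k⁻) := δ_{k_n⁺,k_n⁻} · δ_{k_1⁺,k_1⁻} · tr[(Û_n E_{k_n⁺} Û_n* ⋯ Û_1 E_{k_1⁺} Û_1*)·(Û_1 E_{k_1⁻} Û_1* ⋯ Û_n E_{k_n⁻} Û_n*)], where E_k denotes the rank-one orthogonal projection onto the k-th standard basis vector of ℂ^d. Then for every n ∈ ℕ and all 0 ≤ τ_1 < … < τ_n ≤ 1, setting Û_j := γ(τ_j), one has Σ_{k⁺,k⁻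 ∈ {1,…,d}^n} |Q_{Û_n,…,Û_1}(k⁺,k⁻)| ≤ d² · exp(2(d−1)·Length(γ)). -/
open Matrix
open scoped Matrix.Norms.L2Operator

/-- The generic bi-probability
`Q_{Û_n,…,Û_1}(k⁺,k⁻) = δ_{k_n⁺,k_n⁻} δ_{k_1⁺,k_1⁻} tr[(Û_n E_{k_n⁺} Û_n* ⋯ Û_1 E_{k_1⁺} Û_1*)
(Û_1 E_{k_1⁻} Û_1* ⋯ Û_n E_{k_n⁻} Û_n*)]`, where `E_k` is the rank-one projection onto the
`k`-th standard basis vector; the index `j = 0` corresponds to `Û_1`. -/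
noncomputable def genericBiProb {d n : ℕ} (V : Fin (n + 1) → Matrix (Fin d) (Fin d) ℂ)
    (kp km : Fin (n + 1) → Fin d) : ℂ :=
  (if kp (Fin.last n) = km (Fin.last n) then 1 else 0) *
    (if kp 0 = km 0 then 1 else 0) *
      Matrix.trace
        ((List.ofFn fun j =>
            V j * Matrix.single (kp j) (kp j) 1 * (V j)ᴴ).reverse.prod *
          (List.ofFn fun j =>
            V j * Matrix.single (km j) (km j) 1 * (V j)ᴴ).prod)

/-!
Writing `Û E_k Û*` as the rank-one matrix `v vᴴ`, with `v` the `k`-th column of `Û`, makes the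
two products in `Q` telescope: `Q(k⁺, k⁻)` vanishes unless `k⁺` and `k⁻` have the same
endpoints, and is then `conj A(k⁺) · A(k⁻)` with `A(k) = ∏ⱼ (Û_jᴴ Û_{j+1})_{k_j k_{j+1}}`.
Grouping the paths `k` by their endpoints turns `Σ |Q|` into `Σ_{a,b} G_{ab}²`, where `G` is
the product of the entrywise absolute values of the `Û_jᴴ Û_{j+1}`. The diagonal entries of
`Û_jᴴ Û_{j+1}` have modulus at most `1` and the off-diagonal ones at most `‖Û_{j+1} - Û_j‖`,
so its absolute row sums are at most `exp ((d - 1) ‖Û_{j+1} - Û_j‖)`. Hence every entry of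
`G` is at most `exp ((d - 1) Σⱼ ‖Û_{j+1} - Û_j‖) ≤ exp ((d - 1) Length(γ))`.
-/

open MeasureTheory

theorem Finset.sum_sum_ite_eq_sum_sq {α β R : Type*} [Fintype α] [Fintype β] [DecidableEq β]
    [CommSemiring R] (e : α → β) (g : α → R) :
    ∑ x, ∑ y, (if e x = e y then g x * g y else 0) = ∑ b, (∑ x with e x = b, g x) ^ 2 := by
  calc ∑ x, ∑ y, (if e x = e y then g x * g y else 0)
      = ∑ x, g x * ∑ y with e y = e x, g y := by
        simp only [Finset.sum_filter, Finset.mul_sum, mul_ite, mul_zero, eq_comm]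
    _ = ∑ b, ∑ x with e x = b, g x * ∑ y with e y = b, g y := by
        rw [← Finset.sum_fiberwise Finset.univ e]
        refine Finset.sum_congr rfl fun b _ => Finset.sum_congr rfl fun x hx => ?_
        rw [(Finset.mem_filter.1 hx).2]
    _ = ∑ b, (∑ x with e x = b, g x) ^ 2 := by simp only [sq, Finset.sum_mul]

section PathLength

variable {E : Type*} [NormedAddCommGroup E] [NormedSpace ℝ E] [CompleteSpace E]

theorem norm_sub_le_integral_norm_deriv {f : ℝ → E} (hf : Differentiable ℝ f) {a b : ℝ}
    (hab : a ≤ b) (hint : IntegrableOn (fun t => ‖deriv f t‖) (Set.Icc a b)) :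
    ‖f b - f a‖ ≤ ∫ t in a..b, ‖deriv f t‖ := by
  have hint' : IntervalIntegrable (deriv f) volume a b := by
    rw [intervalIntegrable_iff_integrableOn_Icc_of_le hab]
    exact (integrable_norm_iff (aestronglyMeasurable_deriv f _)).mp hint
  rw [← intervalIntegral.integral_eq_sub_of_hasDerivAt (fun t _ => (hf t).hasDerivAt) hint']
  exact intervalIntegral.norm_integral_le_integral_norm hab

theorem sum_norm_sub_le_integral_norm_deriv {f : ℝ → E} (hf : Differentiable ℝ f) {n : ℕ}
    {τ : Fin (n + 1) → ℝ} (hτ : Monotone τ)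
    (hint : IntegrableOn (fun t => ‖deriv f t‖) (Set.Icc (τ 0) (τ (Fin.last n)))) :
    ∑ j : Fin n, ‖f (τ j.succ) - f (τ j.castSucc)‖ ≤ ∫ t in τ 0..τ (Fin.last n), ‖deriv f t‖ := by
  induction n with
  | zero => simp
  | succ n ih =>
    have hmid : τ 0 ≤ τ (Fin.last n).castSucc ∧ τ (Fin.last n).castSucc ≤ τ (Fin.last (n + 1)) :=
      ⟨hτ (Fin.zero_le _), hτ (Fin.le_last _)⟩
    have hint_left := hint.mono_set (Set.Icc_subset_Icc le_rfl hmid.2)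
    have hint_right := hint.mono_set (Set.Icc_subset_Icc hmid.1 le_rfl)
    rw [Fin.sum_univ_castSucc, ← intervalIntegral.integral_add_adjacent_intervals
      ((intervalIntegrable_iff_integrableOn_Icc_of_le hmid.1).2 hint_left)
      ((intervalIntegrable_iff_integrableOn_Icc_of_le hmid.2).2 hint_right)]
    gcongr
    · exact ih (hτ.comp Fin.strictMono_castSucc.monotone) hint_left
    · exact norm_sub_le_integral_norm_deriv hf hmid.2 hint_right

end PathLength

namespace Matrix

variable {ι R : Type*} [Fintype ι] [DecidableEq ι]

theorem list_prod_ofFn_vecMulVec [CommSemiring R] {n : ℕ} (x y : Fin (n + 1) → ι → R) :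
    (List.ofFn fun j => vecMulVec (x j) (y j)).prod =
      (∏ j : Fin n, y j.castSucc ⬝ᵥ x j.succ) • vecMulVec (x 0) (y (Fin.last n)) := by
  induction n with
  | zero => simp
  | succ n ih =>
    rw [List.ofFn_succ, List.prod_cons, ih (fun j => x j.succ) (fun j => y j.succ),
      mul_smul_comm, vecMulVec_mul_vecMulVec, vecMulVec_smul, smul_smul, Fin.prod_univ_succ]
    simp only [Fin.succ_castSucc, Fin.castSucc_zero, Fin.succ_last, Fin.succ_zero_eq_one]
    rw [mul_comm]

theorem list_prod_ofFn_apply [CommSemiring R] {n : ℕ} (w : Fin n → Matrix ι ι R) (a b : ι) :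
    (List.ofFn w).prod a b =
      ∑ k : Fin (n + 1) → ι with k 0 = a ∧ k (Fin.last n) = b,
        ∏ j : Fin n, w j (k j.castSucc) (k j.succ) := by
  rw [Finset.sum_filter]
  induction n generalizing a with
  | zero =>
    rw [← (Equiv.funUnique (Fin 1) ι).symm.sum_comp]
    rcases eq_or_ne a b with rfl | hab
    · simp
    · simp [hab, Finset.filter_false_of_mem]
  | succ n ih =>
    rw [List.ofFn_succ, List.prod_cons, mul_apply, ← (Fin.consEquiv _).sum_comp,
      Fintype.sum_prod_type]
    simp only [ih, Finset.mul_sum, Fin.consEquiv_apply, Fin.cons_zero, ← Fin.succ_last,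
      Fin.cons_succ, Fin.prod_univ_succ, Fin.castSucc_zero, ← Fin.succ_castSucc, ite_and, mul_ite,
      mul_zero]
    rw [Finset.sum_comm, Finset.sum_comm (γ := ι)]
    simp [Finset.sum_ite_eq, Finset.sum_ite_eq']

theorem list_prod_ofFn_apply_le [CommSemiring R] [PartialOrder R] [IsOrderedRing R] {n : ℕ}
    {A : Fin n → Matrix ι ι R} {r : Fin n → R} (hA : ∀ j a b, 0 ≤ A j a b)
    (hr : ∀ j a, ∑ b, A j a b ≤ r j) (a b : ι) :
    (List.ofFn A).prod a b ≤ ∏ j, r j := by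
  induction n generalizing a with
  | zero =>
    simp only [List.ofFn_zero, List.prod_nil, Finset.univ_eq_empty, Finset.prod_empty, one_apply]
    split_ifs <;> simp
  | succ n ih =>
    have hr_nonneg : ∀ j, 0 ≤ r j := fun j =>
      (Finset.sum_nonneg fun b _ => hA j a b).trans (hr j a)
    rw [List.ofFn_succ, List.prod_cons, mul_apply, Fin.prod_univ_succ]
    calc ∑ u, A 0 a u * (List.ofFn fun j => A j.succ).prod u b
        ≤ ∑ u, A 0 a u * ∏ j : Fin n, r j.succ :=
          Finset.sum_le_sum fun u _ => mul_le_mul_of_nonneg_left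
            (ih (fun j => hA j.succ) (fun j => hr j.succ) u) (hA 0 a u)
      _ ≤ r 0 * ∏ j : Fin n, r j.succ := by
          rw [← Finset.sum_mul]
          exact mul_le_mul_of_nonneg_right (hr 0 a)
            (Finset.prod_nonneg fun j _ => hr_nonneg j.succ)

theorem list_prod_ofFn_apply_nonneg [CommSemiring R] [PartialOrder R] [IsOrderedRing R] {n : ℕ}
    {A : Fin n → Matrix ι ι R} (hA : ∀ j a b, 0 ≤ A j a b) (a b : ι) :
    0 ≤ (List.ofFn A).prod a b := by
  rw [list_prod_ofFn_apply]
  exact Finset.sum_nonneg fun k _ => Finset.prod_nonneg fun j _ => hA _ _ _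

theorem mul_single_one_mul_conjTranspose [Semiring R] [StarRing R] (V : Matrix ι ι R) (k : ι) :
    V * single k k 1 * Vᴴ = vecMulVec (Vᵀ k) (Vᴴ k) := by
  ext a b
  simp [mul_apply, single, vecMulVec_apply, ite_and, Finset.sum_ite_eq, ite_mul]

section Amplitude

variable [CommSemiring R] [StarRing R]

def transitionAmplitude {n : ℕ} (V : Fin (n + 1) → Matrix ι ι R) (k : Fin (n + 1) → ι) : R :=
  ∏ j : Fin n, ((V j.castSucc)ᴴ * V j.succ) (k j.castSucc) (k j.succ)

theorem list_prod_ofFn_mul_single_one_mul_conjTranspose {n : ℕ}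
    (V : Fin (n + 1) → Matrix ι ι R) (k : Fin (n + 1) → ι) :
    (List.ofFn fun j => V j * single (k j) (k j) 1 * (V j)ᴴ).prod =
      transitionAmplitude V k • vecMulVec ((V 0)ᵀ (k 0)) ((V (Fin.last n))ᴴ (k (Fin.last n))) := by
  simp only [mul_single_one_mul_conjTranspose]
  exact list_prod_ofFn_vecMulVec _ _

end Amplitude

variable {𝕜 : Type*} [RCLike 𝕜]

theorem norm_apply_le_l2_opNorm {m : Type*} [Fintype m] (A : Matrix m ι 𝕜) (i : m) (j : ι) :
    ‖A i j‖ ≤ ‖A‖ := by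
  have h := A.l2_opNorm_mulVec (EuclideanSpace.single j 1)
  rw [PiLp.norm_single, norm_one, mul_one] at h
  refine le_trans (le_of_eq ?_) ((PiLp.norm_apply_le _ i).trans h)
  simp [EuclideanSpace.single, mulVec_single]

theorem norm_conjTranspose_mul_apply_le_norm_sub {U V : Matrix ι ι 𝕜}
    (hV : V ∈ unitaryGroup ι 𝕜) {a b : ι} (hab : a ≠ b) :
    ‖(Vᴴ * U) a b‖ ≤ ‖U - V‖ := by
  have : Nontrivial ι := ⟨a, b, hab⟩
  have hsub : (Vᴴ * U) a b = (Vᴴ * (U - V)) a b := by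
    rw [mul_sub, ← star_eq_conjTranspose, mem_unitaryGroup_iff'.mp hV, sub_apply,
      one_apply_ne hab, sub_zero]
  rw [hsub, ← CStarRing.norm_mem_unitary_mul (U - V) (Unitary.star_mem hV)]
  exact norm_apply_le_l2_opNorm _ a b

theorem sum_norm_conjTranspose_mul_apply_le {U V : Matrix ι ι 𝕜} (hU : U ∈ unitaryGroup ι 𝕜)
    (hV : V ∈ unitaryGroup ι 𝕜) (a : ι) :
    ∑ b, ‖(Vᴴ * U) a b‖ ≤ 1 + ((Fintype.card ι : ℝ) - 1) * ‖U - V‖ := by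
  have hVU : Vᴴ * U ∈ unitaryGroup ι 𝕜 := by
    rw [← star_eq_conjTranspose]
    exact mul_mem (Unitary.star_mem hV) hU
  have hcard : (((Finset.univ : Finset ι).erase a).card : ℝ) = (Fintype.card ι : ℝ) - 1 := by
    rw [Finset.card_erase_of_mem (Finset.mem_univ a), Finset.card_univ,
      Nat.cast_sub (Fintype.card_pos_iff.2 ⟨a⟩)]
    simp
  rw [← Finset.add_sum_erase _ _ (Finset.mem_univ a), ← hcard, ← nsmul_eq_mul,
    ← Finset.sum_const]
  gcongr with b hb
  · exact entry_norm_bound_of_unitary hVU a a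
  · exact norm_conjTranspose_mul_apply_le_norm_sub hV (Finset.ne_of_mem_erase hb).symm

theorem list_prod_ofFn_map_norm_apply_le {n : ℕ} {V : Fin (n + 1) → Matrix ι ι 𝕜}
    (hV : ∀ j, V j ∈ unitaryGroup ι 𝕜) (a b : ι) :
    (List.ofFn fun j => ((V j.castSucc)ᴴ * V j.succ).map (‖·‖)).prod a b ≤
      Real.exp (((Fintype.card ι : ℝ) - 1) * ∑ j : Fin n, ‖V j.succ - V j.castSucc‖) := by
  rw [Finset.mul_sum, Real.exp_sum]
  refine list_prod_ofFn_apply_le (fun _ _ _ => by simp only [map_apply, norm_nonneg])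
    (fun j c => ?_) a b
  calc ∑ u, ‖((V j.castSucc)ᴴ * V j.succ) c u‖
      ≤ ((Fintype.card ι : ℝ) - 1) * ‖V j.succ - V j.castSucc‖ + 1 := by
        rw [add_comm]
        exact sum_norm_conjTranspose_mul_apply_le (hV _) (hV _) c
    _ ≤ _ := Real.add_one_le_exp _

end Matrix

theorem genericBiProb_eq {d n : ℕ} {V : Fin (n + 1) → Matrix (Fin d) (Fin d) ℂ}
    (hV : ∀ j, V j ∈ unitaryGroup (Fin d) ℂ) (kp km : Fin (n + 1) → Fin d) :
    genericBiProb V kp km =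
      if (kp 0, kp (Fin.last n)) = (km 0, km (Fin.last n)) then
        star (transitionAmplitude V kp) * transitionAmplitude V km
      else 0 := by
  have hrev : ∀ k : Fin (n + 1) → Fin d,
      (List.ofFn fun j => V j * single (k j) (k j) 1 * (V j)ᴴ).reverse.prod =
        ((List.ofFn fun j => V j * single (k j) (k j) 1 * (V j)ᴴ).prod)ᴴ := by
    intro k
    simp [conjTranspose_list_prod, List.map_ofFn, Function.comp_def, conjTranspose_mul, mul_assoc]
  have hconj : ∀ j k, (V j)ᴴ k = star ((V j)ᵀ k) := fun _ _ => rfl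
  have hunit : ∀ j k, star ((V j)ᵀ k) ⬝ᵥ (V j)ᵀ k = 1 := fun j k => by
    rw [show star ((V j)ᵀ k) ⬝ᵥ (V j)ᵀ k = ((V j)ᴴ * V j) k k from rfl,
      ← star_eq_conjTranspose, mem_unitaryGroup_iff'.mp (hV j), one_apply_eq]
  rw [genericBiProb, hrev, list_prod_ofFn_mul_single_one_mul_conjTranspose,
    list_prod_ofFn_mul_single_one_mul_conjTranspose]
  by_cases h : (kp 0, kp (Fin.last n)) = (km 0, km (Fin.last n))
  · obtain ⟨h0, hl⟩ := Prod.mk.inj h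
    rw [if_pos hl, if_pos h0, if_pos h, ← h0, ← hl, conjTranspose_smul, conjTranspose_vecMulVec,
      smul_mul_smul_comm, vecMulVec_mul_vecMulVec, trace_smul, trace_vecMulVec, hunit, hconj,
      star_star, one_smul, dotProduct_comm, hunit]
    simp
  · simp only [Prod.mk.injEq, not_and_or] at h
    rcases h with h | h <;> simp [h]

theorem sum_norm_genericBiProb_eq {d n : ℕ} {V : Fin (n + 1) → Matrix (Fin d) (Fin d) ℂ}
    (hV : ∀ j, V j ∈ unitaryGroup (Fin d) ℂ) :
    ∑ kp, ∑ km, ‖genericBiProb V kp km‖ =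
      ∑ p : Fin d × Fin d,
        ((List.ofFn fun j => ((V j.castSucc)ᴴ * V j.succ).map (‖·‖)).prod p.1 p.2) ^ 2 := by
  simp only [genericBiProb_eq hV, apply_ite norm, norm_mul, norm_star, norm_zero]
  rw [Finset.sum_sum_ite_eq_sum_sq (fun k => (k 0, k (Fin.last n)))
    (fun k => ‖transitionAmplitude V k‖)]
  refine Finset.sum_congr rfl fun p _ => ?_
  simp only [list_prod_ofFn_apply, transitionAmplitude, norm_prod, Prod.ext_iff, map_apply]

/-- uniform bound for the generic bi-probabilities along a differentiable
path `γ` of unitaries of finite length: for all `0 ≤ τ_1 < … < τ_n ≤ 1`, setting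
`Û_j := γ(τ_j)`, one has
`Σ_{k⁺,k⁻} |Q_{Û_n,…,Û_1}(k⁺,k⁻)| ≤ d² exp(2(d−1)·Length(γ))`, where
`Length(γ) = ∫₀¹ ‖γ'(τ)‖_op dτ`. -/
theorem genericBiProb_uniform_bound {d : ℕ} (hd : 1 ≤ d)
    (γ : ℝ → Matrix (Fin d) (Fin d) ℂ)
    (hγu : ∀ τ ∈ Set.Icc (0 : ℝ) 1, γ τ ∈ Matrix.unitaryGroup (Fin d) ℂ)
    (hγdiff : Differentiable ℝ γ)
    (hγint : MeasureTheory.IntegrableOn (fun τ => ‖deriv γ τ‖) (Set.Icc 0 1))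
    (n : ℕ) (τ : Fin (n + 1) → ℝ) (hτ : StrictMono τ)
    (hτI : ∀ j, τ j ∈ Set.Icc (0 : ℝ) 1) :
    ∑ kp : Fin (n + 1) → Fin d, ∑ km : Fin (n + 1) → Fin d,
        ‖genericBiProb (fun j => γ (τ j)) kp km‖
      ≤ (d : ℝ) ^ 2 *
          Real.exp (2 * ((d : ℝ) - 1) * ∫ τ in (0:ℝ)..1, ‖deriv γ τ‖) := by
  set L := ∫ t in (0:ℝ)..1, ‖deriv γ t‖
  have hV : ∀ j, γ (τ j) ∈ unitaryGroup (Fin d) ℂ := fun j => hγu _ (hτI j)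
  have hchords : ∑ j : Fin n, ‖γ (τ j.succ) - γ (τ j.castSucc)‖ ≤ L :=
    (sum_norm_sub_le_integral_norm_deriv hγdiff hτ.monotone
      (hγint.mono_set (Set.Icc_subset_Icc (hτI 0).1 (hτI _).2))).trans
      (intervalIntegral.integral_mono_interval (hτI 0).1 (hτ.monotone (Fin.zero_le _)) (hτI _).2
        (Filter.Eventually.of_forall fun t => norm_nonneg _)
        ((intervalIntegrable_iff_integrableOn_Icc_of_le zero_le_one).2 hγint))
  have hentry : ∀ a b,
      (List.ofFn fun j => ((γ (τ j.castSucc))ᴴ * γ (τ j.succ)).map (‖·‖)).prod a b ≤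
        Real.exp (((d : ℝ) - 1) * L) := fun a b =>
    (list_prod_ofFn_map_norm_apply_le hV a b).trans <| by
      rw [Fintype.card_fin]
      gcongr
      exact sub_nonneg.2 (Nat.one_le_cast.2 hd)
  rw [sum_norm_genericBiProb_eq hV]
  calc _ ≤ ∑ _p : Fin d × Fin d, Real.exp (((d : ℝ) - 1) * L) ^ 2 := by
        gcongr
        · exact list_prod_ofFn_apply_nonneg (fun _ _ _ => by simp only [map_apply, norm_nonneg]) _ _
        · exact hentry _ _
    _ = (d : ℝ) ^ 2 * Real.exp (2 * ((d : ℝ) - 1) * L) := by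
        rw [Finset.sum_const, Finset.card_univ, Fintype.card_prod, Fintype.card_fin, nsmul_eq_mul,
          ← Real.exp_nat_mul]
        push_cast
        ring_nf
end

section
/- Let d ∈ ℕ, d ≥ 1, ρ a density matrix on ℂ^d, and U : ℝ → M_d(ℂ) a family of unitary matrices. Let {F} be a collection of observables, each F represented by a PVM {P^F(f)}_{f∈Ω(F)} on a finite set Ω(F), and set P_t^F(f) := U(t)* P^F(f) U(t). For times t_1 < … < t_n, observables F_1,…,F_n ∈ {F}, and tuples f⁺, f⁻ with f_j^± ∈ Ω(F_j), define the multi-observable bi-probability Q^{F_n,…,F_1}_{t_n,…,t_1}(f⁺,f⁻) := tr[P^{F_n}_{t_n}(f_n⁺)⋯P^{F_1}_{t_1}(f_1⁺)·ρ·P^{F_1}_{t_1}(f_1⁻)⋯P^{F_n}_{t_n}(f_n⁻)]. Then this family is bi-consistent: for every j ∈ {1,…,n} and all fixed f_i^± (i ≠ j), Σ_{f_j⁺,f_j⁻ ∈ Ω(F_j)} Q^{F_n,…,F_1}_{t_n,…,t_1}(f⁺,f⁻) = Q^{F_n,…,F_{j+1},F_{j−1},…,F_1}_{t_n,…,t_{j+1},t_{j−1},…,t_1}(f⁺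 with the j-th entry deleted, f⁻ with the j-th entry deleted). -/
open Matrix
open scoped ComplexOrder

section helpers
variable {M : Type*} [Semiring M] {α : Type*} [Fintype α]

private theorem fin_one_zero {j : Fin (0+1)} : j = 0 := by
  apply Fin.ext; omega

theorem sum_update_prod :
    ∀ {n : ℕ} (A : Fin (n+1) → M) (j : Fin (n+1)) (B : α → M),
      ∑ a, (List.ofFn (Function.update A j (B a))).prod
        = (List.ofFn (Function.update A j (∑ a, B a))).prod := by
  intro n
  induction n with
  | zero =>
      intro A j B
      have hj : j = 0 := fin_one_zero
      subst hj
      simp [List.ofFn_succ, Finset.sum_mul]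
  | succ m ih =>
      intro A j B
      induction j using Fin.cases with
      | zero =>
          have h : ∀ x : M, (fun i : Fin (m+1) => Function.update A 0 x i.succ)
              = fun i => A i.succ := by
            intro x; funext i; exact Function.update_of_ne (Fin.succ_ne_zero i) _ _
          have key : ∀ x : M, (List.ofFn (Function.update A 0 x)).prod
              = x * (List.ofFn fun i : Fin (m+1) => A i.succ).prod := by
            intro x
            rw [List.ofFn_succ, List.prod_cons, Function.update_self, h x]
          simp only [key, ← Finset.sum_mul]
      | succ i =>
          have h : ∀ x : M, (fun k : Fin (m+1) => Function.update A i.succ x k.succ)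
              = Function.update (fun k : Fin (m+1) => A k.succ) i x := by
            intro x; funext k
            rcases eq_or_ne k i with rfl | hk
            · simp
            · rw [Function.update_of_ne hk,
                Function.update_of_ne (fun h => hk (Fin.succ_injective _ h))]
          have key : ∀ x : M, (List.ofFn (Function.update A i.succ x)).prod
              = A 0 * (List.ofFn (Function.update (fun k : Fin (m+1) => A k.succ) i x)).prod := by
            intro x
            rw [List.ofFn_succ, List.prod_cons,
              Function.update_of_ne (Fin.succ_ne_zero i).symm, h x]
          simp only [key, ← Finset.mul_sum, ih]

theorem sum_update_revprod :
    ∀ {n : ℕ} (A : Fin (n+1) → M) (j : Fin (n+1)) (B : α → M),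
      ∑ a, (List.ofFn (Function.update A j (B a))).reverse.prod
        = (List.ofFn (Function.update A j (∑ a, B a))).reverse.prod := by
  intro n
  induction n with
  | zero =>
      intro A j B
      have hj : j = 0 := fin_one_zero
      subst hj
      simp [List.ofFn_succ, Finset.mul_sum]
  | succ m ih =>
      intro A j B
      induction j using Fin.cases with
      | zero =>
          have h : ∀ x : M, (fun i : Fin (m+1) => Function.update A 0 x i.succ)
              = fun i => A i.succ := by
            intro x; funext i; exact Function.update_of_ne (Fin.succ_ne_zero i) _ _
          have key : ∀ x : M, (List.ofFn (Function.update A 0 x)).reverse.prod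
              = (List.ofFn fun i : Fin (m+1) => A i.succ).reverse.prod * x := by
            intro x
            rw [List.ofFn_succ, List.reverse_cons, List.prod_append, List.prod_cons,
              List.prod_nil, mul_one, Function.update_self, h x]
          simp only [key, ← Finset.mul_sum]
      | succ i =>
          have h : ∀ x : M, (fun k : Fin (m+1) => Function.update A i.succ x k.succ)
              = Function.update (fun k : Fin (m+1) => A k.succ) i x := by
            intro x; funext k
            rcases eq_or_ne k i with rfl | hk
            · simp
            · rw [Function.update_of_ne hk,
                Function.update_of_ne (fun h => hk (Fin.succ_injective _ h))]
          have key : ∀ x : M, (List.ofFn (Function.update A i.succ x)).reverse.prod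
              = (List.ofFn (Function.update (fun k : Fin (m+1) => A k.succ) i x)).reverse.prod
                  * A 0 := by
            intro x
            rw [List.ofFn_succ, List.reverse_cons, List.prod_append, List.prod_cons,
              List.prod_nil, mul_one, Function.update_of_ne (Fin.succ_ne_zero i).symm, h x]
          simp only [key, ← Finset.sum_mul, ih]

theorem prod_ofFn_one_delete {M : Type*} [Monoid M] :
    ∀ {n : ℕ} (f : Fin (n+1) → M) (j : Fin (n+1)), f j = 1 →
      (List.ofFn f).prod = (List.ofFn (f ∘ j.succAbove)).prod := by
  intro n
  induction n with
  | zero =>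
      intro f j hf
      have hj : j = 0 := fin_one_zero
      subst hj
      simp [List.ofFn_succ, hf]
  | succ m ih =>
      intro f j hf
      have key : ∀ (g : Fin (m+1+1) → M),
          (List.ofFn g).prod = g 0 * (List.ofFn fun k : Fin (m+1) => g k.succ).prod := by
        intro g; rw [List.ofFn_succ, List.prod_cons]
      induction j using Fin.cases with
      | zero =>
          rw [key f, hf, one_mul]
          simp [Function.comp, Fin.succAbove_zero]
      | succ i =>
          have h1 : (f ∘ (i.succ).succAbove) 0 = f 0 := by
            simp [Function.comp, Fin.succ_succAbove_zero]
          have h2 : (fun k : Fin m => (f ∘ (i.succ).succAbove) k.succ)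
              = (fun k : Fin (m+1) => f k.succ) ∘ i.succAbove := by
            funext k; simp [Function.comp, Fin.succ_succAbove_succ]
          cases m with
          | zero =>
              rw [key f]
              have : (List.ofFn (f ∘ (i.succ).succAbove)) = [f 0] := by
                simp [List.ofFn_succ, h1]
              rw [this, List.prod_cons, List.prod_nil, mul_one]
              have hf1 : f 1 = 1 := by
                have hi : i = 0 := fin_one_zero
                subst hi; simpa using hf
              simp [List.ofFn_succ, hf1]
          | succ m' =>
              have key' : ∀ (g : Fin (m'+1+1) → M),
                  (List.ofFn g).prod
                    = g 0 * (List.ofFn fun k : Fin (m'+1) => g k.succ).prod := by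
                intro g; rw [List.ofFn_succ, List.prod_cons]
              rw [key f, key' (f ∘ (i.succ).succAbove), h1, h2,
                ← ih (fun k => f k.succ) i hf]

theorem revprod_ofFn_one_delete {M : Type*} [Monoid M] :
    ∀ {n : ℕ} (f : Fin (n+1) → M) (j : Fin (n+1)), f j = 1 →
      (List.ofFn f).reverse.prod = (List.ofFn (f ∘ j.succAbove)).reverse.prod := by
  intro n
  induction n with
  | zero =>
      intro f j hf
      have hj : j = 0 := fin_one_zero
      subst hj
      simp [List.ofFn_succ, hf]
  | succ m ih =>
      intro f j hf
      have key : ∀ (g : Fin (m+1+1) → M),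
          (List.ofFn g).reverse.prod
            = (List.ofFn fun k : Fin (m+1) => g k.succ).reverse.prod * g 0 := by
        intro g
        rw [List.ofFn_succ, List.reverse_cons, List.prod_append, List.prod_cons,
          List.prod_nil, mul_one]
      induction j using Fin.cases with
      | zero =>
          rw [key f, hf, mul_one]
          simp [Function.comp, Fin.succAbove_zero]
      | succ i =>
          have h1 : (f ∘ (i.succ).succAbove) 0 = f 0 := by
            simp [Function.comp, Fin.succ_succAbove_zero]
          have h2 : (fun k : Fin m => (f ∘ (i.succ).succAbove) k.succ)
              = (fun k : Fin (m+1) => f k.succ) ∘ i.succAbove := by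
            funext k; simp [Function.comp, Fin.succ_succAbove_succ]
          cases m with
          | zero =>
              have : (List.ofFn (f ∘ (i.succ).succAbove)) = [f 0] := by
                simp [List.ofFn_succ, h1]
              rw [key f, this]
              show _ * _ = [f 0].prod
              rw [List.prod_cons, List.prod_nil, mul_one]
              have hf1 : f 1 = 1 := by
                have hi : i = 0 := fin_one_zero
                subst hi; simpa using hf
              simp [List.ofFn_succ, hf1]
          | succ m' =>
              have key' : ∀ (g : Fin (m'+1+1) → M),
                  (List.ofFn g).reverse.prod
                    = (List.ofFn fun k : Fin (m'+1) => g k.succ).reverse.prod * g 0 := by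
                intro g
                rw [List.ofFn_succ, List.reverse_cons, List.prod_append, List.prod_cons,
                  List.prod_nil, mul_one]
              rw [key f, key' (f ∘ (i.succ).succAbove), h1, h2,
                ← ih (fun k => f k.succ) i hf]

end helpers

/-- The multi-observable quantum bi-probability
`Q^{F_n,…,F_1}_{t_n,…,t_1}(f⁺,f⁻) =
tr[P^{F_n}_{t_n}(f_n⁺)⋯P^{F_1}_{t_1}(f_1⁺) ρ P^{F_1}_{t_1}(f_1⁻)⋯P^{F_n}_{t_n}(f_n⁻)]`,
where `P^F_t(f) = U(t)* P^F(f) U(t)` and the index `j = 0` corresponds to the earliest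
time `t_1`. -/
noncomputable def multiObsBiProb {d : ℕ} {ι : Type*} {Ω : ι → Type*}
    (ρ : Matrix (Fin d) (Fin d) ℂ) (P : ∀ i, Ω i → Matrix (Fin d) (Fin d) ℂ)
    (U : ℝ → Matrix (Fin d) (Fin d) ℂ) {n : ℕ} (t : Fin n → ℝ) (F : Fin n → ι)
    (fp fm : ∀ j, Ω (F j)) : ℂ :=
  Matrix.trace
    ((List.ofFn fun j => (U (t j))ᴴ * P (F j) (fp j) * U (t j)).reverse.prod * ρ *
      (List.ofFn fun j => (U (t j))ᴴ * P (F j) (fm j) * U (t j)).prod)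

/-- bi-consistency of the multi-observable quantum bi-probabilities: summing
over the pair of outcomes of the observable `F_j` measured at the `j`-th time yields the
bi-probability with the `j`-th time (and observable) deleted. -/
theorem multiObsBiProb_biConsistent {d : ℕ} (hd : 1 ≤ d)
    {ι : Type*} {Ω : ι → Type*} [∀ i, Fintype (Ω i)] [∀ i, Nonempty (Ω i)]
    [∀ i, DecidableEq (Ω i)]
    (ρ : Matrix (Fin d) (Fin d) ℂ) (hρ : ρ.PosSemidef) (hρtr : ρ.trace = 1)
    (P : ∀ i, Ω i → Matrix (Fin d) (Fin d) ℂ)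
    (hPsa : ∀ i f, (P i f).IsHermitian) (hPidem : ∀ i f, P i f * P i f = P i f)
    (hPorth : ∀ i f f', f ≠ f' → P i f * P i f' = 0)
    (hPsum : ∀ i, ∑ f, P i f = 1)
    (U : ℝ → Matrix (Fin d) (Fin d) ℂ)
    (hU : ∀ t, U t ∈ Matrix.unitaryGroup (Fin d) ℂ)
    (n : ℕ) (t : Fin (n + 1) → ℝ) (ht : StrictMono t) (F : Fin (n + 1) → ι)
    (j : Fin (n + 1)) (fp fm : ∀ k, Ω (F k)) :
    ∑ a : Ω (F j), ∑ b : Ω (F j),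
        multiObsBiProb ρ P U t F (Function.update fp j a) (Function.update fm j b)
      = multiObsBiProb ρ P U (t ∘ j.succAbove) (F ∘ j.succAbove)
          (fun k => fp (j.succAbove k)) (fun k => fm (j.succAbove k)) := by
  
  classical
  simp only [multiObsBiProb]
  set Ap : Fin (n+1) → Matrix (Fin d) (Fin d) ℂ :=
    fun k => (U (t k))ᴴ * P (F k) (fp k) * U (t k) with hAp
  set Am : Fin (n+1) → Matrix (Fin d) (Fin d) ℂ :=
    fun k => (U (t k))ᴴ * P (F k) (fm k) * U (t k) with hAm
  have hfp : ∀ a : Ω (F j),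
      (fun k => (U (t k))ᴴ * P (F k) (Function.update fp j a k) * U (t k))
        = Function.update Ap j ((U (t j))ᴴ * P (F j) a * U (t j)) := by
    intro a; funext k
    rcases eq_or_ne k j with rfl | hk
    · simp [hAp]
    · rw [Function.update_of_ne hk, Function.update_of_ne hk]
  have hfm : ∀ b : Ω (F j),
      (fun k => (U (t k))ᴴ * P (F k) (Function.update fm j b k) * U (t k))
        = Function.update Am j ((U (t j))ᴴ * P (F j) b * U (t j)) := by
    intro b; funext k
    rcases eq_or_ne k j with rfl | hk
    · simp [hAm]
    · rw [Function.update_of_ne hk, Function.update_of_ne hk]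
  have hUU : (U (t j))ᴴ * U (t j) = 1 := by
    have := (Unitary.mem_iff.mp (hU (t j))).1
    simpa [Matrix.star_eq_conjTranspose] using this
  have hsum1 : ∑ a : Ω (F j), (U (t j))ᴴ * P (F j) a * U (t j) = 1 := by
    rw [← Finset.sum_mul, ← Finset.mul_sum, hPsum, mul_one, hUU]
  have hcompP : Function.update Ap j (1 : Matrix (Fin d) (Fin d) ℂ) ∘ j.succAbove
      = Ap ∘ j.succAbove := by
    funext k
    exact Function.update_of_ne (Fin.succAbove_ne j k) _ _
  have hcompM : Function.update Am j (1 : Matrix (Fin d) (Fin d) ℂ) ∘ j.succAbove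
      = Am ∘ j.succAbove := by
    funext k
    exact Function.update_of_ne (Fin.succAbove_ne j k) _ _
  simp_rw [hfp, hfm]
  calc
    ∑ a : Ω (F j), ∑ b : Ω (F j),
        Matrix.trace
          ((List.ofFn (Function.update Ap j ((U (t j))ᴴ * P (F j) a * U (t j)))).reverse.prod
            * ρ *
            (List.ofFn (Function.update Am j ((U (t j))ᴴ * P (F j) b * U (t j)))).prod)
      = Matrix.trace
          ((∑ a : Ω (F j),
              (List.ofFn (Function.update Ap j ((U (t j))ᴴ * P (F j) a * U (t j)))).reverse.prod)
            * ρ *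
            (∑ b : Ω (F j),
              (List.ofFn (Function.update Am j ((U (t j))ᴴ * P (F j) b * U (t j)))).prod)) := by
        rw [Finset.sum_mul, Finset.sum_mul]
        simp only [Finset.mul_sum, Matrix.trace_sum]
    _ = Matrix.trace
          ((List.ofFn (Function.update Ap j (1 : Matrix (Fin d) (Fin d) ℂ))).reverse.prod * ρ *
            (List.ofFn (Function.update Am j (1 : Matrix (Fin d) (Fin d) ℂ))).prod) := by
        rw [sum_update_revprod, sum_update_prod, hsum1]
    _ = Matrix.trace
          ((List.ofFn (Ap ∘ j.succAbove)).reverse.prod * ρ *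
            (List.ofFn (Am ∘ j.succAbove)).prod) := by
        rw [revprod_ofFn_one_delete _ j (Function.update_self j _ Ap),
          prod_ofFn_one_delete _ j (Function.update_self j _ Am), hcompP, hcompM]
    _ = Matrix.trace
          ((List.ofFn fun k => (U ((t ∘ j.succAbove) k))ᴴ * P ((F ∘ j.succAbove) k)
              (fp (j.succAbove k)) * U ((t ∘ j.succAbove) k)).reverse.prod * ρ *
            (List.ofFn fun k => (U ((t ∘ j.succAbove) k))ᴴ * P ((F ∘ j.succAbove) k)
              (fm (j.succAbove k)) * U ((t ∘ j.succAbove) k)).prod) := by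
        rw [hAp, hAm]; rfl
end

section
/- Let d ∈ ℕ, d ≥ 1, and let U : ℝ → M_d(ℂ) be a differentiable family of unitary matrices whose derivative has operator norm v(t) := ‖U'(t)‖_op integrable on [s,t], s ≤ t. Then for any two orthogonal unit vectors x, y ∈ ℂ^d (⟨y,x⟩ = 0), the transition amplitude of the propagator U(t)U(s)* satisfies |⟨y, U(t)U(s)* x⟩| ≤ ∫_s^t v(r) dr. Consequently, the 'leave' probability satisfies Σ_{k : e_k ⊥ x} |⟨e_k, U(t)U(s)* x⟩|² = 1 − |⟨x, U(t)U(s)* x⟩|² when {e_k} is an orthonormal basis containing x. -/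
open Matrix
open scoped Matrix.Norms.L2Operator

/-!
Writing `U(t)U(s)* x = (U(t) - U(s))U(s)* x + x` and using `⟨y, x⟩ = 0`, the amplitude is
bounded by `‖(U(t) - U(s))U(s)*‖ = ‖U(t) - U(s)‖`, and the displacement `‖U(t) - U(s)‖` is at most
the integral of the speed `‖U'‖`. The leave probability is Parseval's identity for the unit
vector `U(t)U(s)* x` with the `x`-term split off.
-/

section EuclideanMatrix

variable {𝕜 n : Type*} [RCLike 𝕜] [Fintype n] [DecidableEq n]

lemma Matrix.norm_toEuclideanLin_of_mem_unitaryGroup {A : Matrix n n 𝕜}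
    (hA : A ∈ unitaryGroup n 𝕜) (x : EuclideanSpace 𝕜 n) :
    ‖toEuclideanLin A x‖ = ‖x‖ :=
  ContinuousLinearMap.norm_map_of_mem_unitary
    (Unitary.map_mem (toEuclideanCLM (n := n) (𝕜 := 𝕜)) hA) x

lemma Matrix.norm_inner_toEuclideanLin_le (A : Matrix n n 𝕜) (x y : EuclideanSpace 𝕜 n) :
    ‖(inner 𝕜 y (toEuclideanLin A x) : 𝕜)‖ ≤ ‖y‖ * (‖A‖ * ‖x‖) :=
  (norm_inner_le_norm _ _).trans <| by gcongr; exact l2_opNorm_mulVec A x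

end EuclideanMatrix

lemma OrthonormalBasis.sum_filter_ne_sq_norm_inner_right {𝕜 E ι : Type*} [RCLike 𝕜]
    [NormedAddCommGroup E] [InnerProductSpace 𝕜 E] [Fintype ι] [DecidableEq ι]
    (b : OrthonormalBasis ι 𝕜 E) (i₀ : ι) (w : E) :
    ∑ k ∈ Finset.univ.filter (· ≠ i₀), ‖(inner 𝕜 (b k) w : 𝕜)‖ ^ 2
      = ‖w‖ ^ 2 - ‖(inner 𝕜 (b i₀) w : 𝕜)‖ ^ 2 := by
  rw [Finset.filter_ne', Finset.sum_erase_eq_sub (Finset.mem_univ i₀),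
    b.sum_sq_norm_inner_right]

theorem transition_amplitude_bound_general {d : ℕ}
    (U : ℝ → Matrix (Fin d) (Fin d) ℂ)
    (hU : ∀ t, U t ∈ Matrix.unitaryGroup (Fin d) ℂ)
    (hUdiff : Differentiable ℝ U)
    {s t : ℝ} (hst : s ≤ t)
    (hUint : MeasureTheory.IntegrableOn (fun r => ‖deriv U r‖) (Set.Icc s t)) :
    (∀ x y : EuclideanSpace ℂ (Fin d), ‖x‖ = 1 → ‖y‖ = 1 →
      (inner ℂ y x : ℂ) = 0 →
        ‖(inner ℂ y (Matrix.toEuclideanLin (U t * (U s)ᴴ) x) : ℂ)‖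
          ≤ ∫ r in s..t, ‖deriv U r‖) ∧
      ∀ x : EuclideanSpace ℂ (Fin d), ‖x‖ = 1 →
        ∀ (b : OrthonormalBasis (Fin d) ℂ (EuclideanSpace ℂ (Fin d))) (i₀ : Fin d),
          b i₀ = x →
            ∑ k ∈ Finset.univ.filter (· ≠ i₀),
                ‖(inner ℂ (b k) (Matrix.toEuclideanLin (U t * (U s)ᴴ) x) : ℂ)‖ ^ 2
              = 1 - ‖(inner ℂ x (Matrix.toEuclideanLin (U t * (U s)ᴴ) x) : ℂ)‖ ^ 2 := by
  have hUs_adj : (U s)ᴴ ∈ unitaryGroup (Fin d) ℂ := Unitary.star_mem (hU s)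
  refine ⟨fun x y hx hy hxy => ?_, fun x hx b i₀ hbi => ?_⟩
  · have hsplit : U t * (U s)ᴴ = (U t - U s) * (U s)ᴴ + 1 := by
      rw [sub_mul, ← star_eq_conjTranspose, mem_unitaryGroup_iff.1 (hU s), sub_add_cancel]
    have hdisplacement : ‖U t - U s‖ ≤ ∫ r in s..t, ‖deriv U r‖ :=
      norm_sub_le_integral_of_norm_deriv_le_of_le hst hUdiff.continuous.continuousOn
        hUdiff.differentiableOn (.of_forall fun _ _ => le_rfl)
        ((intervalIntegrable_iff_integrableOn_Icc_of_le hst).2 hUint)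
    calc ‖(inner ℂ y (toEuclideanLin (U t * (U s)ᴴ) x) : ℂ)‖
        = ‖(inner ℂ y (toEuclideanLin ((U t - U s) * (U s)ᴴ) x) : ℂ)‖ := by
          rw [hsplit, map_add, LinearMap.add_apply, inner_add_right, toLpLin_one,
            LinearMap.id_apply, hxy, add_zero]
      _ ≤ ‖y‖ * (‖(U t - U s) * (U s)ᴴ‖ * ‖x‖) := norm_inner_toEuclideanLin_le _ x y
      _ = ‖U t - U s‖ := by rw [CStarRing.norm_mul_mem_unitary _ hUs_adj, hx, hy]; ring
      _ ≤ ∫ r in s..t, ‖deriv U r‖ := hdisplacement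
  · rw [b.sum_filter_ne_sq_norm_inner_right, hbi,
      norm_toEuclideanLin_of_mem_unitaryGroup (mul_mem (hU t) hUs_adj), hx, one_pow]

/-- for a differentiable family of unitaries `U` with integrable
operator-norm derivative `v(r) = ‖U'(r)‖` on `[s,t]`, the transition amplitude of the
propagator `U(t)U(s)*` between orthogonal unit vectors is bounded by `∫_s^t v(r) dr`;
consequently, for an orthonormal basis `b` containing the unit vector `x` (say `b i₀ = x`),
the 'leave' probability satisfies
`Σ_{k ≠ i₀} |⟨b k, U(t)U(s)* x⟩|² = 1 − |⟨x, U(t)U(s)* x⟩|²`. -/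
theorem transition_amplitude_bound {d : ℕ} (hd : 1 ≤ d)
    (U : ℝ → Matrix (Fin d) (Fin d) ℂ)
    (hU : ∀ t, U t ∈ Matrix.unitaryGroup (Fin d) ℂ)
    (hUdiff : Differentiable ℝ U)
    {s t : ℝ} (hst : s ≤ t)
    (hUint : MeasureTheory.IntegrableOn (fun r => ‖deriv U r‖) (Set.Icc s t)) :
    (∀ x y : EuclideanSpace ℂ (Fin d), ‖x‖ = 1 → ‖y‖ = 1 →
      (inner ℂ y x : ℂ) = 0 →
        ‖(inner ℂ y (Matrix.toEuclideanLin (U t * (U s)ᴴ) x) : ℂ)‖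
          ≤ ∫ r in s..t, ‖deriv U r‖) ∧
      ∀ x : EuclideanSpace ℂ (Fin d), ‖x‖ = 1 →
        ∀ (b : OrthonormalBasis (Fin d) ℂ (EuclideanSpace ℂ (Fin d))) (i₀ : Fin d),
          b i₀ = x →
            ∑ k ∈ Finset.univ.filter (· ≠ i₀),
                ‖(inner ℂ (b k) (Matrix.toEuclideanLin (U t * (U s)ᴴ) x) : ℂ)‖ ^ 2
              = 1 - ‖(inner ℂ x (Matrix.toEuclideanLin (U t * (U s)ᴴ) x) : ℂ)‖ ^ 2 :=
  transition_amplitude_bound_general U hU hUdiff hst hUint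
end
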